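/- arXiv:0706.1045 — 10 statements merged into one kernel-verified Lean document; each statement's English description precedes it below -/
import Mathlib

section
/- Let R = M_n(F) where F is an algebraically closed field of characteristic p > 0 with p ≠ 2 and p ∤ n, and let G be a finite elementary abelian p-group. Suppose R = ⊕_{g∈G} R_g is a G-grading of the Lie algebra R^(−), i.e. [R_g, R_h] ⊆ R_{gh} for all g,h ∈ G. Then R = ⊕_{g∈G} R_g is a G-grading of the associative algebra R (i.e. R_g R_h ⊆ R_{gh} for all g,h ∈ G) if and only if the identity matrix 1 lies in the component R_1 of the neutral element of G. -/
/-!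
An additive character `c : G → F` turns the grading into the operator `D_c` acting on `R_g` as
multiplication by `c g`. For a Lie grading `D_c` is a Lie derivation, and `1 ∈ R_1` gives
`D_c 1 = 0`. When `2` and `n` are invertible in `F`, a Lie derivation `D` of `M_n(F)` killing `1`
is inner: after subtracting an inner derivation each `D e_kk` is diagonal, hence scalar, so `D`
commutes with the diagonal torus and maps each `e_ij` to some `c_ij e_ij`; then `D 1 = 0` kills the
scalars and the bracket relations force `c_ij = b_i - b_j`, i.e. `D = ad (diagonal b)`. Being
inner, `D_c` is an associative derivation, so `D_c (x y) = (c g + c h) x y` for `x ∈ R_g`,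
`y ∈ R_h`. Since `G` is elementary abelian, the characters `G → 𝔽_p ⊆ F` separate its points,
hence `x y ∈ R_{gh}`. Conversely, `1` lies in the neutral component of any group grading of a
unital associative algebra.
-/

attribute [local instance] LieRing.ofAssociativeRing LieAlgebra.ofAssociativeAlgebra

open DirectSum

section Grading

variable {A G : Type*} [Group G] [DecidableEq G]

theorem one_mem_one_of_mul_mem {R : Type*} [Semiring R] [Semiring A] [Module R A]
    (𝒜 : G → Submodule R A) [Decomposition 𝒜]
    (hmul : ∀ g h : G, ∀ x ∈ 𝒜 g, ∀ y ∈ 𝒜 h, x * y ∈ 𝒜 (g * h)) : (1 : A) ∈ 𝒜 1 := by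
  have hleft : ∀ h z, z ∈ 𝒜 h → ∀ x : A, (decompose 𝒜 (x * z) h : A) = decompose 𝒜 x 1 * z := by
    intro h z hz x
    induction x using Decomposition.inductionOn 𝒜 with
    | zero => simp
    | @homogeneous g x =>
      by_cases hg : g = 1
      · subst hg
        rw [decompose_of_mem_same 𝒜 x.2,
          decompose_of_mem_same 𝒜 (by simpa using hmul _ _ _ x.2 _ hz)]
      · rw [decompose_of_mem_ne 𝒜 x.2 hg, zero_mul,
          decompose_of_mem_ne 𝒜 (hmul _ _ _ x.2 _ hz) (by simpa using hg)]
    | add x x' hx hx' => simp [add_mul, hx, hx']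
  have hunit : ∀ z : A, (decompose 𝒜 1 1 : A) * z = z := by
    intro z
    induction z using Decomposition.inductionOn 𝒜 with
    | zero => simp
    | @homogeneous h z => rw [← hleft h z z.2 1, one_mul, decompose_of_mem_same 𝒜 z.2]
    | add z z' hz hz' => rw [mul_add, hz, hz']
  rw [← hunit 1, mul_one]
  exact (decompose 𝒜 (1 : A) 1).2

variable {K : Type*} [Field K] [Ring A] [Algebra K A] (𝒜 : G → Submodule K A) [Decomposition 𝒜]

def gradingDerivation (c : Additive G →+ K) : A →ₗ[K] A :=
  toModule K G A (fun g => c (.ofMul g) • (𝒜 g).subtype) ∘ₗ (decomposeLinearEquiv 𝒜).toLinearMap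

variable {𝒜}

lemma gradingDerivation_apply_of_mem (c : Additive G →+ K) {g : G} {x : A} (hx : x ∈ 𝒜 g) :
    gradingDerivation 𝒜 c x = c (.ofMul g) • x := by
  rw [gradingDerivation, LinearMap.comp_apply, LinearEquiv.coe_coe, decomposeLinearEquiv_apply,
    decompose_of_mem 𝒜 hx, ← lof_eq_of K, toModule_lof]
  rfl

lemma decompose_gradingDerivation (c : Additive G →+ K) (x : A) (k : G) :
    (decompose 𝒜 (gradingDerivation 𝒜 c x) k : A) = c (.ofMul k) • (decompose 𝒜 x k : A) := by
  induction x using Decomposition.inductionOn 𝒜 with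
  | zero => simp
  | @homogeneous g x =>
    rw [gradingDerivation_apply_of_mem c x.2, decompose_smul, DFinsupp.smul_apply,
      Submodule.coe_smul]
    by_cases hg : g = k
    · subst hg
      rfl
    · rw [decompose_of_mem_ne 𝒜 x.2 hg, smul_zero, smul_zero]
  | add x x' hx hx' => simp [hx, hx']

lemma mem_of_forall_gradingDerivation_eq
    (hsep : ∀ g : G, g ≠ 1 → ∃ c : Additive G →+ K, c (.ofMul g) ≠ 0) {g : G} {x : A}
    (hx : ∀ c, gradingDerivation 𝒜 c x = c (.ofMul g) • x) : x ∈ 𝒜 g := by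
  have hcomp : ∀ k, k ≠ g → (decompose 𝒜 x k : A) = 0 := by
    intro k hk
    obtain ⟨c, hc⟩ := hsep (g / k) (div_ne_one.mpr (Ne.symm hk))
    have h := decompose_gradingDerivation (𝒜 := 𝒜) c x k
    rw [hx, decompose_smul, DFinsupp.smul_apply, Submodule.coe_smul, ← sub_eq_zero, ← sub_smul,
      ← map_sub, ← ofMul_div] at h
    exact (smul_eq_zero.mp h).resolve_left hc
  have hx' : decompose 𝒜 x = of (fun g => 𝒜 g) g (decompose 𝒜 x g) := by
    ext k
    by_cases hk : k = g
    · subst hk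
      simp
    · rw [of_eq_of_ne _ _ _ hk, hcomp k hk, ZeroMemClass.coe_zero]
  rw [← (decompose 𝒜).symm_apply_apply x, hx', decompose_symm_of]
  exact (decompose 𝒜 x g).2

def gradingLieDerivation (hLie : ∀ g h : G, ∀ x ∈ 𝒜 g, ∀ y ∈ 𝒜 h, ⁅x, y⁆ ∈ 𝒜 (g * h))
    (c : Additive G →+ K) : LieDerivation K A A where
  toLinearMap := gradingDerivation 𝒜 c
  leibniz' x y := by
    induction x using Decomposition.inductionOn 𝒜 with
    | zero => simp
    | @homogeneous g x =>
      induction y using Decomposition.inductionOn 𝒜 with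
      | zero => simp
      | @homogeneous h y =>
        rw [gradingDerivation_apply_of_mem c (hLie _ _ _ x.2 _ y.2),
          gradingDerivation_apply_of_mem c x.2, gradingDerivation_apply_of_mem c y.2, ofMul_mul,
          map_add]
        simp only [Ring.lie_def, mul_smul_comm, smul_mul_assoc]
        module
      | add y y' hy hy' => simp only [lie_add, add_lie, map_add, hy, hy']; abel
    | add x x' hx hx' => simp only [add_lie, lie_add, map_add, hx, hx']; abel

theorem mul_mem_of_lie_mem (hsep : ∀ g : G, g ≠ 1 → ∃ c : Additive G →+ K, c (.ofMul g) ≠ 0)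
    (hLie : ∀ g h : G, ∀ x ∈ 𝒜 g, ∀ y ∈ 𝒜 h, ⁅x, y⁆ ∈ 𝒜 (g * h)) (h1 : (1 : A) ∈ 𝒜 1)
    (hinner : ∀ D : LieDerivation K A A, D 1 = 0 → ∃ a : A, ∀ x, D x = ⁅a, x⁆)
    {g h : G} {x y : A} (hx : x ∈ 𝒜 g) (hy : y ∈ 𝒜 h) : x * y ∈ 𝒜 (g * h) := by
  refine mem_of_forall_gradingDerivation_eq hsep fun c => ?_
  obtain ⟨a, ha⟩ := hinner (gradingLieDerivation hLie c)
    (by simp [gradingLieDerivation, gradingDerivation_apply_of_mem c h1])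
  have hD : ∀ z, gradingDerivation 𝒜 c z = ⁅a, z⁆ := ha
  calc gradingDerivation 𝒜 c (x * y) = ⁅a, x⁆ * y + x * ⁅a, y⁆ := by
        simp only [hD, Ring.lie_def]; noncomm_ring
    _ = c (.ofMul (g * h)) • (x * y) := by
        rw [← hD, ← hD, gradingDerivation_apply_of_mem c hx, gradingDerivation_apply_of_mem c hy,
          ofMul_mul, map_add, add_smul, smul_mul_assoc, mul_smul_comm]

end Grading

theorem exists_addMonoidHom_apply_ne_zero {F G : Type*} [Field F] [CommGroup G] (p : ℕ)
    [Fact p.Prime] [CharP F p] (hG : ∀ g : G, g ^ p = 1) {g : G} (hg : g ≠ 1) :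
    ∃ c : Additive G →+ F, c (.ofMul g) ≠ 0 := by
  have : Module (ZMod p) (Additive G) := AddCommGroup.zmodModule fun x => by
    simpa using congrArg Additive.ofMul (hG x.toMul)
  obtain ⟨φ, hφ⟩ : ∃ φ : Module.Dual (ZMod p) (Additive G), φ (Additive.ofMul g) ≠ 0 := by
    by_contra! h
    exact hg (ofMul_eq_zero.mp ((Module.forall_dual_apply_eq_zero_iff (ZMod p) _).mp h))
  refine ⟨(ZMod.castHom dvd_rfl F).toAddMonoidHom.comp φ.toAddMonoidHom, ?_⟩
  simpa using (map_ne_zero_iff _ (ZMod.castHom_injective F)).mpr hφ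

namespace Matrix

variable {n α : Type*} [Fintype n] [DecidableEq n]

lemma lie_single_one_apply [Ring α] (k l : n) (X : Matrix n n α) (s t : n) :
    ⁅single k l (1 : α), X⁆ s t = (if s = k then X l t else 0) - (if t = l then X s k else 0) := by
  rw [Ring.lie_def, sub_apply]
  congr 1 <;> split_ifs <;> simp_all

lemma lie_diagonal_apply [CommRing α] (d : n → α) (X : Matrix n n α) (s t : n) :
    ⁅diagonal d, X⁆ s t = (d s - d t) * X s t := by
  rw [Ring.lie_def, sub_apply, diagonal_mul, mul_diagonal]
  ring

lemma lie_single_single [Ring α] (i j k l : n) :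
    ⁅single i j (1 : α), single k l (1 : α)⁆ =
      (if j = k then single i l (1 : α) else 0) - (if l = i then single k j 1 else 0) := by
  rw [Ring.lie_def]
  congr 1 <;> split_ifs <;> simp_all

variable {F : Type*} [Field F]

lemma lie_single_same_single (k i j : n) :
    ⁅single k k (1 : F), single i j (1 : F)⁆ =
      ((if k = i then 1 else 0) - (if j = k then 1 else 0) : F) • single i j 1 := by
  rw [lie_single_single]
  split_ifs <;> simp_all

lemma lie_diagonal_single (d : n → F) (i j : n) :
    ⁅diagonal d, single i j (1 : F)⁆ = (d i - d j) • single i j 1 := by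
  ext s t
  rw [lie_diagonal_apply, smul_apply, single_apply, smul_eq_mul]
  split_ifs with h
  · obtain ⟨rfl, rfl⟩ := h
    rfl
  · simp

lemma eq_smul_single_of_forall_lie (h2 : (2 : F) ≠ 0) {i j : n} (hij : i ≠ j) {X : Matrix n n F}
    (hX : ∀ k, ⁅single k k (1 : F), X⁆ =
      ((if k = i then 1 else 0) - (if j = k then 1 else 0) : F) • X) :
    X = X i j • single i j 1 := by
  ext s t
  have h k := congrFun₂ (hX k) s t
  simp only [lie_single_one_apply, smul_apply, smul_eq_mul] at h
  rw [smul_apply, single_apply, smul_eq_mul]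
  by_cases hst : i = s ∧ j = t
  · obtain ⟨rfl, rfl⟩ := hst
    simp
  rw [if_neg hst, mul_zero]
  by_cases hs : s = t
  · subst hs
    by_cases hsi : s = i
    · subst hsi
      simpa [Ne.symm hij] using (h s).symm
    · simpa [hsi, Ne.symm hij] using (h i).symm
  by_cases hsi : s = i
  · subst hsi
    have ht : t ≠ j := fun ht => hst ⟨rfl, ht.symm⟩
    simpa [hs, Ne.symm hs, ht, Ne.symm ht] using h t
  · by_cases hsj : j = s
    · subst hsj
      have hneg : X j t = -X j t := by simpa [Ne.symm hs, hsi] using h j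
      exact (mul_eq_zero.mp (by linear_combination hneg : (2 : F) * X j t = 0)).resolve_left h2
    · simpa [hs, Ne.symm hs, hsi, hsj] using h s

section LieDerivation

variable (D : LieDerivation F (Matrix n n F) (Matrix n n F))

lemma exists_apply_single_same_eq_lie_of_ne :
    ∃ a : Matrix n n F, ∀ k s t, s ≠ t → D (single k k 1) s t = ⁅a, single k k (1 : F)⁆ s t := by
  have hcomm : ∀ j k, j ≠ k → ∀ s t,
      ⁅single j j (1 : F), D (single k k 1)⁆ s t = ⁅single k k (1 : F), D (single j j 1)⁆ s t := by
    intro j k hjk s t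
    have h := D.apply_lie_eq_sub (single j j (1 : F)) (single k k 1)
    rw [lie_single_single, if_neg hjk, if_neg hjk.symm, sub_zero, map_zero, eq_comm,
      sub_eq_zero] at h
    rw [h]
  -- for `D = ad b` this recovers `b` up to its diagonal
  refine ⟨of fun s t => D (single t t 1) s t, fun k s t hst => ?_⟩
  rw [← lie_skew, neg_apply, lie_single_one_apply]
  by_cases htk : t = k
  · subst htk
    simp [hst]
  · have h := hcomm t k htk s t
    simp only [lie_single_one_apply, if_neg hst, if_neg htk, of_apply] at h ⊢
    by_cases hsk : s = k
    · subst hsk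
      simp only [if_true] at h ⊢
      linear_combination -h
    · simp only [if_neg hsk, if_true] at h ⊢
      linear_combination -h

lemma apply_single_same_diag_eq (k i j : n) : D (single k k 1) i i = D (single k k 1) j j := by
  by_cases hij : i = j
  · rw [hij]
  have h := congrFun₂ (D.apply_lie_eq_sub (single k k (1 : F)) (single i j 1)) i j
  rw [lie_single_single] at h
  by_cases hki : k = i
  · subst hki
    simp only [↓reduceIte, Ne.symm hij, sub_zero, sub_apply, lie_single_one_apply] at h
    linear_combination -h
  · by_cases hkj : j = k
    · subst hkj
      simp only [Ne.symm hij, ↓reduceIte, zero_sub, map_neg, neg_apply, sub_apply,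
        lie_single_one_apply, hij] at h
      linear_combination -h
    · simp only [hki, ↓reduceIte, hkj, sub_self, map_zero, zero_apply, sub_apply,
        lie_single_one_apply, Ne.symm hki, zero_sub, neg_sub] at h
      linear_combination -h

lemma apply_single_same_eq_smul_one {k : n} (hoff : ∀ s t, s ≠ t → D (single k k 1) s t = 0) :
    D (single k k 1) = D (single k k 1) k k • 1 := by
  ext s t
  rw [smul_apply, one_apply]
  split_ifs with hst
  · subst hst
    simp [apply_single_same_diag_eq D k s k]
  · simp [hoff s t hst]

end LieDerivation

section Scalars

variable {E : LieDerivation F (Matrix n n F) (Matrix n n F)} {w : n → F} {c : n → n → F}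
  {i j k : n}

lemma apply_single_eq_smul_single (h2 : (2 : F) ≠ 0) (hw : ∀ k, E (single k k 1) = w k • 1)
    (hij : i ≠ j) : E (single i j 1) = E (single i j 1) i j • single i j 1 :=
  eq_smul_single_of_forall_lie h2 hij fun k => by
    have h := E.apply_lie_eq_sub (single k k (1 : F)) (single i j 1)
    rwa [lie_single_same_single, map_smul, hw, lie_smul,
      (Commute.one_right (single i j (1 : F))).lie_eq, smul_zero, sub_zero, eq_comm] at h

lemma sub_smul_one_eq_smul (hw : ∀ k, E (single k k 1) = w k • 1)
    (hc : ∀ i j, i ≠ j → E (single i j 1) = c i j • single i j 1) (hij : i ≠ j) :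
    (w i - w j) • (1 : Matrix n n F) = (c i j + c j i) • (single i i 1 - single j j 1) := by
  have h := E.apply_lie_eq_sub (single i j (1 : F)) (single j i 1)
  rw [lie_single_single, if_pos rfl, if_pos rfl, map_sub, hw, hw, hc i j hij, hc j i hij.symm,
    lie_smul, lie_smul, lie_single_single, lie_single_single] at h
  simp only [if_true] at h
  rw [sub_smul, h]
  module

lemma eq_of_forall_apply_single_eq_smul (h2 : (2 : F) ≠ 0) (hw : ∀ k, E (single k k 1) = w k • 1)
    (hc : ∀ i j, i ≠ j → E (single i j 1) = c i j • single i j 1) (i j : n) : w i = w j := by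
  by_cases hij : i = j
  · rw [hij]
  have hi := congrFun₂ (sub_smul_one_eq_smul hw hc hij) i i
  have hj := congrFun₂ (sub_smul_one_eq_smul hw hc hij) j j
  simp only [smul_apply, one_apply_eq, smul_eq_mul, mul_one, sub_apply, single_apply_same,
    Ne.symm hij, and_self, not_false_eq_true, single_apply_of_ne, sub_zero, hij, zero_sub, mul_neg,
    neg_add_rev] at hi hj
  exact sub_eq_zero.mp ((mul_eq_zero.mp (by linear_combination hi + hj :
    (2 : F) * (w i - w j) = 0)).resolve_left h2)

lemma add_eq_zero_of_forall_apply_single_eq_smul (h2 : (2 : F) ≠ 0)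
    (hw : ∀ k, E (single k k 1) = w k • 1)
    (hc : ∀ i j, i ≠ j → E (single i j 1) = c i j • single i j 1) (hij : i ≠ j) :
    c i j + c j i = 0 := by
  have hi := congrFun₂ (sub_smul_one_eq_smul hw hc hij) i i
  simp only [eq_of_forall_apply_single_eq_smul h2 hw hc i j, sub_self, smul_apply, one_apply_eq,
    smul_eq_mul, mul_one, sub_apply, single_apply_same, Ne.symm hij, and_self, not_false_eq_true,
    single_apply_of_ne, sub_zero] at hi
  exact hi.symm

lemma add_eq_of_forall_apply_single_eq_smul
    (hc : ∀ i j, i ≠ j → E (single i j 1) = c i j • single i j 1)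
    (hij : i ≠ j) (hjk : j ≠ k) (hik : i ≠ k) : c i k = c i j + c j k := by
  have h := E.apply_lie_eq_sub (single i j (1 : F)) (single j k 1)
  rw [lie_single_single, if_pos rfl, if_neg hik.symm, sub_zero, hc i k hik, hc i j hij,
    hc j k hjk, lie_smul, lie_smul, lie_single_single, lie_single_single] at h
  simpa [Ne.symm hik, add_comm] using congrFun₂ h i k

lemma card_mul_eq_zero_of_map_one (hw : ∀ k, E (single k k 1) = w k • 1)
    (hconst : ∀ i j, w i = w j) (h1 : E 1 = 0) (k : n) : (Fintype.card n : F) * w k = 0 := by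
  have h := congrFun₂ (congrArg E (sum_single_one (m := n) (α := F))) k k
  simp only [h1, map_sum, hw, hconst _ k, Finset.sum_const, Finset.card_univ] at h
  simpa using h

end Scalars

lemma exists_eq_lie_diagonal (h2 : (2 : F) ≠ 0) (hn : (Fintype.card n : F) ≠ 0)
    (E : LieDerivation F (Matrix n n F) (Matrix n n F)) (h1 : E 1 = 0)
    (hoff : ∀ k s t, s ≠ t → E (single k k 1) s t = 0) :
    ∃ b : n → F, ∀ x, E x = ⁅diagonal b, x⁆ := by
  obtain ⟨i₀⟩ : Nonempty n :=
    Fintype.card_pos_iff.mp (Nat.pos_of_ne_zero fun h => hn (by simp [h]))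
  set w : n → F := fun k => E (single k k 1) k k
  set c : n → n → F := fun i j => E (single i j 1) i j
  have hw : ∀ k, E (single k k 1) = w k • 1 := fun k => apply_single_same_eq_smul_one E (hoff k)
  have hc : ∀ i j, i ≠ j → E (single i j 1) = c i j • single i j 1 := fun i j =>
    apply_single_eq_smul_single h2 hw
  have hw₀ : ∀ k, w k = 0 := fun k => (mul_eq_zero.mp (card_mul_eq_zero_of_map_one hw
    (eq_of_forall_apply_single_eq_smul h2 hw hc) h1 k)).resolve_left hn
  have hskew i j (hij : i ≠ j) := add_eq_zero_of_forall_apply_single_eq_smul h2 hw hc hij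
  have hc_sub : ∀ i j, i ≠ j → c i j = c i i₀ - c j i₀ := by
    intro i j hij
    have hc₀ : c i₀ i₀ = 0 := hw₀ i₀
    by_cases hi : i = i₀
    · subst hi
      linear_combination hskew i j hij - hc₀
    by_cases hj : j = i₀
    · subst hj
      linear_combination hc₀
    · linear_combination add_eq_of_forall_apply_single_eq_smul hc hi (Ne.symm hj) hij +
        hskew j i₀ hj
  refine ⟨fun i => c i i₀, fun x => LinearMap.congr_fun (?_ : (E : Matrix n n F →ₗ[F] _) =
    LieAlgebra.ad F _ (diagonal fun i => c i i₀)) x⟩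
  refine ext_linearMap F fun i j => LinearMap.ext_ring ?_
  simp only [LinearMap.comp_apply, singleLinearMap_apply, LieAlgebra.ad_apply,
    LieDerivation.coeFn_coe]
  by_cases hij : i = j
  · subst hij
    rw [hw, hw₀, zero_smul, lie_diagonal_single, sub_self, zero_smul]
  · rw [hc i j hij, lie_diagonal_single, hc_sub i j hij]

theorem exists_eq_lie_of_lieDerivation (h2 : (2 : F) ≠ 0) (hn : (Fintype.card n : F) ≠ 0)
    (D : LieDerivation F (Matrix n n F) (Matrix n n F)) (h1 : D 1 = 0) :
    ∃ a : Matrix n n F, ∀ x, D x = ⁅a, x⁆ := by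
  obtain ⟨a, ha⟩ := exists_apply_single_same_eq_lie_of_ne D
  obtain ⟨b, hb⟩ := exists_eq_lie_diagonal h2 hn (D - LieDerivation.ad F _ a)
    (by simp [h1, (Commute.one_left a).lie_eq]) (fun k s t hst => by simp [ha k s t hst])
  refine ⟨a + diagonal b, fun x => ?_⟩
  have hx := hb x
  simp only [LieDerivation.coe_sub, Pi.sub_apply, LieDerivation.ad_apply_apply] at hx
  rw [add_lie, ← hx]
  abel

end Matrix

theorem stmt_0_general {F : Type*} [Field F] {p : ℕ} (hp : 0 < p)
    [CharP F p] (hp2 : p ≠ 2) {n : ℕ} (hn : ¬ p ∣ n)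
    {G : Type*} [CommGroup G]
    (hG : ∀ g : G, g ≠ 1 → orderOf g = p)
    (Rg : G → Submodule F (Matrix (Fin n) (Fin n) F))
    (hindep : iSupIndep Rg) (hsup : ⨆ g, Rg g = ⊤)
    (hLie : ∀ g h : G, ∀ x ∈ Rg g, ∀ y ∈ Rg h, x * y - y * x ∈ Rg (g * h)) :
    (∀ g h : G, ∀ x ∈ Rg g, ∀ y ∈ Rg h, x * y ∈ Rg (g * h)) ↔
      (1 : Matrix (Fin n) (Fin n) F) ∈ Rg 1 := by
  classical
  have : Fact p.Prime := ⟨(CharP.char_is_prime_or_zero F p).resolve_right hp.ne'⟩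
  have h2 : (2 : F) ≠ 0 := Ring.two_ne_zero (by rwa [ringChar.eq F p])
  have hnF : (Fintype.card (Fin n) : F) ≠ 0 := by
    rwa [Fintype.card_fin, Ne, CharP.cast_eq_zero_iff F p]
  have hexp : ∀ g : G, g ^ p = 1 := fun g => by
    by_cases hg : g = 1
    · rw [hg, one_pow]
    · rw [← hG g hg, pow_orderOf_eq_one]
  have : Decomposition Rg :=
    ((isInternal_submodule_iff_iSupIndep_and_iSup_eq_top Rg).mpr ⟨hindep, hsup⟩).chooseDecomposition
  exact ⟨one_mem_one_of_mul_mem Rg, fun h1 g h x hx y hy =>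
    mul_mem_of_lie_mem (fun _ => exists_addMonoidHom_apply_ne_zero p hexp) hLie h1
      (Matrix.exists_eq_lie_of_lieDerivation h2 hnF) hx hy⟩

/-- Corollary 3.1: For `R = Mₙ(F)`, `F` algebraically closed of characteristic `p > 0`,
`p ≠ 2`, `p ∤ n`, and `G` a finite elementary abelian `p`-group, a `G`-grading of the
Lie algebra `R⁽⁻⁾` is a `G`-grading of the associative algebra `R` iff `1 ∈ R₁`. -/
theorem stmt_0 {F : Type*} [Field F] [IsAlgClosed F] {p : ℕ} (hp : 0 < p)
    [CharP F p] (hp2 : p ≠ 2) {n : ℕ} (hn : ¬ p ∣ n)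
    {G : Type*} [CommGroup G] [Fintype G]
    (hG : ∀ g : G, g ≠ 1 → orderOf g = p)
    (Rg : G → Submodule F (Matrix (Fin n) (Fin n) F))
    (hindep : iSupIndep Rg) (hsup : ⨆ g, Rg g = ⊤)
    (hLie : ∀ g h : G, ∀ x ∈ Rg g, ∀ y ∈ Rg h, x * y - y * x ∈ Rg (g * h)) :
    (∀ g h : G, ∀ x ∈ Rg g, ∀ y ∈ Rg h, x * y ∈ Rg (g * h)) ↔
      (1 : Matrix (Fin n) (Fin n) F) ∈ Rg 1 :=
  stmt_0_general hp hp2 hn hG Rg hindep hsup hLie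
end

section
/- (Lemma 3.4) Under the standing hypotheses on F, R, e, q, the maps δ⁽ᵏ⁾ and σ (in particular the generalized Lie Leibniz rule (iii) for two factors and δ⁽ᵏ⁾(e) = 0 for 1 ≤ k ≤ q−1), there exist s ∈ R and z ∈ Z(R) = F·1 such that σ(e) = [s,e] + z = se − es + z. -/
/-!
Put `a = σ(e)` and `f = 1 - e`. Taking `x = e` in the two-factor Lie rule, the hypothesis
`δ⁽ᵏ⁾(e) = 0` kills every term but two and leaves `σ([e,w]) = [e,σ(w)] + [a,w]`. Compressing
this identity to the Peirce corners shows that `eae + faf` commutes with `eRe`, `eRf`, `fRe` and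
`fRf`, so it is central, i.e. a scalar matrix; the off-diagonal rest `eaf + fae` of `a` is the
commutator `[fae - eaf, e]`.
-/

open Finset

section

variable {R : Type*} [Ring R]

def peirceDiag (e a : R) : R := e * a * e + (1 - e) * a * (1 - e)

theorem peirce_sum (e x : R) :
    e * x * e + e * x * (1 - e) + (1 - e) * x * e + (1 - e) * x * (1 - e) = x := by
  noncomm_ring

theorem peirceDiag_one_sub_neg (e a : R) : peirceDiag (1 - e) (-a) = -peirceDiag e a := by
  simp only [peirceDiag, sub_sub_cancel]
  noncomm_ring

theorem lie_one_sub_eq_of_lie_eq {e a : R} {σ : R →+ R}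
    (hσ : ∀ w, σ ⁅e, w⁆ = ⁅e, σ w⁆ + ⁅a, w⁆) (w : R) : σ ⁅1 - e, w⁆ = ⁅1 - e, σ w⁆ + ⁅-a, w⁆ := by
  have hlie : ∀ y : R, ⁅1 - e, y⁆ = -⁅e, y⁆ := fun y => by
    simp only [Ring.lie_def]; noncomm_ring
  rw [hlie, hlie, map_neg, hσ]
  simp only [Ring.lie_def]
  noncomm_ring

end

namespace IsIdempotentElem

variable {R : Type*} [Ring R] {e : R} (he : IsIdempotentElem e)
include he

theorem lie_mul_mul_self (x : R) : ⁅e, e * x * e⁆ = 0 := by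
  simp only [Ring.lie_def, ← mul_assoc, he.eq, he.mul_mul_self, sub_self]

theorem lie_mul_mul_one_sub (x : R) : ⁅e, e * x * (1 - e)⁆ = e * x * (1 - e) := by
  simp only [Ring.lie_def, mul_sub, sub_mul, mul_one, ← mul_assoc, he.eq, he.mul_mul_self]
  abel

theorem mul_lie_mul_self (y : R) : e * ⁅e, y⁆ * e = 0 := by
  simp only [Ring.lie_def, mul_sub, sub_mul, ← mul_assoc, he.eq, he.mul_mul_self, sub_self]

theorem mul_lie_mul_one_sub (y : R) : e * ⁅e, y⁆ * (1 - e) = e * y * (1 - e) := by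
  simp only [Ring.lie_def, mul_sub, sub_mul, mul_one, ← mul_assoc, he.eq, he.mul_mul_self]
  abel

theorem lie_peirceDiag_mul_mul_self (a x : R) :
    ⁅peirceDiag e a, e * x * e⁆ = e * ⁅a, e * x * e⁆ * e := by
  simp only [peirceDiag, Ring.lie_def, mul_sub, sub_mul, add_mul, mul_add, mul_one, one_mul,
    ← mul_assoc, he.eq, he.mul_mul_self]
  abel

theorem lie_peirceDiag_mul_mul_one_sub (a x : R) :
    ⁅peirceDiag e a, e * x * (1 - e)⁆ = e * ⁅a, e * x * (1 - e)⁆ * (1 - e) := by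
  simp only [peirceDiag, Ring.lie_def, mul_sub, sub_mul, add_mul, mul_add, mul_one, one_mul,
    ← mul_assoc, he.eq, he.mul_mul_self]
  abel

theorem eq_lie_add_peirceDiag (a : R) :
    a = ⁅(1 - e) * a * e - e * a * (1 - e), e⁆ + peirceDiag e a := by
  simp only [peirceDiag, Ring.lie_def, mul_sub, sub_mul, mul_one, one_mul, ← mul_assoc, he.eq,
    he.mul_mul_self]
  noncomm_ring

section

variable {σ : R →+ R} {a : R} (hσ : ∀ w, σ ⁅e, w⁆ = ⁅e, σ w⁆ + ⁅a, w⁆)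
include hσ

theorem commute_peirceDiag_corners (x : R) :
    Commute (peirceDiag e a) (e * x * e) ∧ Commute (peirceDiag e a) (e * x * (1 - e)) := by
  simp only [commute_iff_lie_eq, he.lie_peirceDiag_mul_mul_self,
    he.lie_peirceDiag_mul_mul_one_sub]
  constructor
  · have h := hσ (e * x * e)
    rw [he.lie_mul_mul_self, map_zero, eq_comm, add_eq_zero_iff_neg_eq] at h
    rw [← h, mul_neg, neg_mul, he.mul_lie_mul_self, neg_zero]
  · have h := hσ (e * x * (1 - e))
    rw [he.lie_mul_mul_one_sub] at h
    rw [eq_sub_of_add_eq' h.symm, mul_sub e, sub_mul _ _ (1 - e), he.mul_lie_mul_one_sub, sub_self]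

theorem peirceDiag_mem_center : peirceDiag e a ∈ Set.center R := by
  -- the hypothesis is invariant under `(e, a) ↦ (1 - e, -a)`, which handles the corners of `1 - e`
  have hf := commute_peirceDiag_corners he.one_sub (lie_one_sub_eq_of_lie_eq hσ)
  simp only [peirceDiag_one_sub_neg, Commute.neg_left_iff, sub_sub_cancel] at hf
  refine Semigroup.mem_center_iff.mpr fun x => ?_
  rw [← peirce_sum e x]
  obtain ⟨h11, h12⟩ := commute_peirceDiag_corners he hσ x
  obtain ⟨h22, h21⟩ := hf x
  exact (((h11.add_right h12).add_right h21).add_right h22).symm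

end

theorem exists_eq_lie_add_mem_center (σ : R →+ R) (hσ : ∀ w, σ ⁅e, w⁆ = ⁅e, σ w⁆ + ⁅σ e, w⁆) :
    ∃ s : R, ∃ z ∈ Set.center R, σ e = ⁅s, e⁆ + z :=
  ⟨_, _, he.peirceDiag_mem_center hσ, he.eq_lie_add_peirceDiag (σ e)⟩

end IsIdempotentElem

theorem sum_lie_eq_of_apply_eq_zero {R : Type*} [Ring R] {q : ℕ} (hq : q ≠ 0) (D : ℕ → R → R)
    (hD0 : ∀ y, D 0 y = y) {e : R} (hDe : ∀ k, 1 ≤ k → k ≤ q - 1 → D k e = 0) (w : R) :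
    ∑ k ∈ range (q + 1), ⁅D k e, D (q - k) w⁆ = ⁅e, D q w⁆ + ⁅D q e, w⁆ := by
  rw [sum_eq_add 0 q (Ne.symm hq) (fun k hk ⟨hk0, hkq⟩ => ?_) (by simp) (by simp)]
  · simp only [hD0, Nat.sub_zero, Nat.sub_self]
  · rw [hDe k (by omega) (by rw [mem_range] at hk; omega), Ring.lie_def, zero_mul, mul_zero,
      sub_zero]

/-- `D k` is `δ⁽ᵏ⁾` for `k < q`, and `D q` is `σ`. -/
theorem stmt_2_general {F : Type*} [Field F]
    {n : ℕ}
    (e : Matrix (Fin n) (Fin n) F) (he : e * e = e)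
    (q : ℕ) (hq : 2 ≤ q)
    (D : ℕ → Matrix (Fin n) (Fin n) F →ₗ[F] Matrix (Fin n) (Fin n) F)
    (hD0 : D 0 = LinearMap.id)
    (hDe : ∀ k, 1 ≤ k → k ≤ q - 1 → D k e = 0)
    (hLie2 : ∀ x y, D q (x * y - y * x) =
      ∑ k ∈ Finset.range (q + 1), (D k x * D (q - k) y - D (q - k) y * D k x)) :
    ∃ (s : Matrix (Fin n) (Fin n) F) (c : F),
      D q e = (s * e - e * s) + c • (1 : Matrix (Fin n) (Fin n) F) := by
  have hσ : ∀ w, D q ⁅e, w⁆ = ⁅e, D q w⁆ + ⁅D q e, w⁆ := fun w => by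
    rw [← sum_lie_eq_of_apply_eq_zero (by omega) (fun k => D k) (by simp [hD0]) hDe w]
    exact hLie2 e w
  obtain ⟨s, z, hz, hs⟩ :=
    IsIdempotentElem.exists_eq_lie_add_mem_center he (D q).toAddMonoidHom hσ
  rw [Matrix.center_eq_range] at hz
  obtain ⟨c, rfl⟩ := hz
  refine ⟨s, c, ?_⟩
  rwa [Matrix.scalar_apply, ← Matrix.smul_one_eq_diagonal] at hs

/-- Lemma 3.4: under the standing hypotheses, `σ(e) = [s,e] + z` for some `s ∈ R`
and `z ∈ Z(R) = F·1`.  Here `D k` for `1 ≤ k ≤ q-1` are the maps `δ⁽ᵏ⁾`, `D 0 = id`,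
and `D q = σ`. -/
theorem stmt_2 {F : Type*} [Field F] {p : ℕ} [CharP F p] (hp2 : p ≠ 2)
    {n : ℕ} (hn : 2 ≤ n)
    (e : Matrix (Fin n) (Fin n) F) (he : e * e = e) (he0 : e ≠ 0) (he1 : e ≠ 1)
    (q : ℕ) (hq : 2 ≤ q)
    (D : ℕ → Matrix (Fin n) (Fin n) F →ₗ[F] Matrix (Fin n) (Fin n) F)
    (hD0 : D 0 = LinearMap.id)
    (hDe : ∀ k, 1 ≤ k → k ≤ q - 1 → D k e = 0)
    (hLeib : ∀ m, 1 ≤ m → m ≤ q - 1 → ∀ x y,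
      D m (x * y) = ∑ k ∈ Finset.range (m + 1), D k x * D (m - k) y)
    (hLie2 : ∀ x y, D q (x * y - y * x) =
      ∑ k ∈ Finset.range (q + 1), (D k x * D (q - k) y - D (q - k) y * D k x))
    (hLie3 : ∀ x y w, D q (x * (y * w - w * y) - (y * w - w * y) * x) =
      ∑ k ∈ Finset.range (q + 1), ∑ l ∈ Finset.range (q + 1 - k),
        (D k x * (D l y * D (q - k - l) w - D (q - k - l) w * D l y) -
          (D l y * D (q - k - l) w - D (q - k - l) w * D l y) * D k x)) :
    ∃ (s : Matrix (Fin n) (Fin n) F) (c : F),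
      D q e = (s * e - e * s) + c • (1 : Matrix (Fin n) (Fin n) F) :=
  stmt_2_general e he q hq D hD0 hDe hLie2
end

section
/- (Lemma 3.5) Under the standing hypotheses on F, R, e, q, the maps δ⁽ᵏ⁾ and σ, assume additionally that σ(e) ∈ Z(R) = F·1. Then σ(R₁₂) ⊆ R₁₂ and σ(R₂₁) ⊆ R₂₁. -/
/-- Lemma 3.5: under the standing hypotheses and `σ(e) ∈ Z(R) = F·1`,
`σ(R₁₂) ⊆ R₁₂` and `σ(R₂₁) ⊆ R₂₁`, where `R₁₂ = eR(1-e)`, `R₂₁ = (1-e)Re`. -/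
theorem stmt_3 {F : Type*} [Field F] {p : ℕ} [CharP F p] (hp2 : p ≠ 2)
    {n : ℕ} (hn : 2 ≤ n)
    (e : Matrix (Fin n) (Fin n) F) (he : e * e = e) (he0 : e ≠ 0) (he1 : e ≠ 1)
    (q : ℕ) (hq : 2 ≤ q)
    (D : ℕ → Matrix (Fin n) (Fin n) F →ₗ[F] Matrix (Fin n) (Fin n) F)
    (hD0 : D 0 = LinearMap.id)
    (hDe : ∀ k, 1 ≤ k → k ≤ q - 1 → D k e = 0)
    (hLeib : ∀ m, 1 ≤ m → m ≤ q - 1 → ∀ x y,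
      D m (x * y) = ∑ k ∈ Finset.range (m + 1), D k x * D (m - k) y)
    (hLie2 : ∀ x y, D q (x * y - y * x) =
      ∑ k ∈ Finset.range (q + 1), (D k x * D (q - k) y - D (q - k) y * D k x))
    (hLie3 : ∀ x y w, D q (x * (y * w - w * y) - (y * w - w * y) * x) =
      ∑ k ∈ Finset.range (q + 1), ∑ l ∈ Finset.range (q + 1 - k),
        (D k x * (D l y * D (q - k - l) w - D (q - k - l) w * D l y) -
          (D l y * D (q - k - l) w - D (q - k - l) w * D l y) * D k x))
    (hσe : ∃ c : F, D q e = c • (1 : Matrix (Fin n) (Fin n) F))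
    :
    (∀ x, x = e * x * (1 - e) → D q x = e * (D q x) * (1 - e)) ∧
    (∀ x, x = (1 - e) * x * e → D q x = (1 - e) * (D q x) * e) := by
  -- char F ≠ 2, so 2 ≠ 0 in F
  have two_ne : (2 : F) ≠ 0 := by
    intro h
    have hd : p ∣ 2 := (CharP.cast_eq_zero_iff F p 2).mp (by exact_mod_cast h)
    rcases CharP.char_is_prime_or_zero F p with hpr | h0
    · exact hp2 ((Nat.prime_dvd_prime_iff_eq hpr Nat.prime_two).mp hd)
    · subst h0
      exact absurd (zero_dvd_iff.mp hd) (by norm_num)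
  have cancel2 : ∀ M : Matrix (Fin n) (Fin n) F, M = -M → M = 0 := by
    intro M hM
    have h2 : (2 : F) • M = 0 := by
      rw [two_smul]
      nth_rewrite 1 [hM]
      exact neg_add_cancel M
    rcases smul_eq_zero.mp h2 with h' | h'
    · exact absurd h' two_ne
    · exact h'
  -- key identity: σ([e,x]) = [e, σ(x)]
  have key : ∀ x, D q (e * x - x * e) = e * D q x - D q x * e := by
    obtain ⟨c, hc⟩ := hσe
    intro x
    rw [hLie2 e x, Finset.sum_eq_single 0]
    · simp [hD0]
    · intro k hk hk0
      rcases eq_or_ne k q with rfl | hkq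
      · simp [hc, hD0, smul_mul_assoc, mul_smul_comm]
      · have hk1 : 1 ≤ k := Nat.one_le_iff_ne_zero.mpr hk0
        have hkq' : k ≤ q - 1 := by
          have : k < q + 1 := Finset.mem_range.mp hk
          omega
        rw [hDe k hk1 hkq']
        simp
    · intro h
      exact absurd (Finset.mem_range.mpr (by omega)) h
  constructor
  · -- case R₁₂
    intro x hx
    have hex : e * x = x := by
      conv_lhs => rw [hx]
      rw [← mul_assoc, ← mul_assoc, he, ← hx]
    have hxe : x * e = 0 := by
      conv_lhs => rw [hx]
      rw [mul_assoc, sub_mul, one_mul, he, sub_self, mul_zero]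
    have hy : D q x = e * D q x - D q x * e := by
      have h := key x
      rwa [hex, hxe, sub_zero] at h
    -- e (D q x) e = 0
    have h1 : e * D q x * e = 0 := by
      have h := congrArg (e * ·) hy
      simp only [mul_sub, ← mul_assoc, he] at h
      exact sub_eq_self.mp h.symm
    -- (D q x) e = 0
    have h2 : D q x * e = 0 := by
      apply cancel2
      have h := congrArg (· * e) hy
      simp only [sub_mul, mul_assoc, he] at h
      rw [← mul_assoc, h1, zero_sub] at h
      exact h
    rw [h2, sub_zero] at hy
    rw [mul_sub, mul_one, h1, sub_zero]
    exact hy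
  · -- case R₂₁
    intro x hx
    have hxe : x * e = x := by
      conv_lhs => rw [hx]
      rw [mul_assoc, mul_assoc, he, ← mul_assoc, ← hx]
    have hex : e * x = 0 := by
      conv_lhs => rw [hx]
      rw [← mul_assoc, ← mul_assoc, mul_sub, mul_one, he, sub_self, zero_mul, zero_mul]
    have hy : D q x = D q x * e - e * D q x := by
      have h := key x
      rw [hex, hxe, zero_sub, map_neg] at h
      have h' := congrArg Neg.neg h
      rwa [neg_neg, neg_sub] at h'
    -- e (D q x) e = 0
    have h1 : e * (D q x * e) = 0 := by
      have h := congrArg (· * e) hy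
      simp only [sub_mul, mul_assoc, he] at h
      exact sub_eq_self.mp h.symm
    -- e (D q x) = 0
    have h2 : e * D q x = 0 := by
      apply cancel2
      have h := congrArg (e * ·) hy
      simp only [mul_sub, ← mul_assoc, he] at h
      rw [mul_assoc] at h
      rw [h1, zero_sub] at h
      exact h
    rw [h2, sub_zero] at hy
    rw [sub_mul, one_mul, sub_mul, mul_assoc, h1, sub_zero]
    exact hy
end

section
/- (Lemma 3.6) Under the standing hypotheses on F, R, e, q, the maps δ⁽ᵏ⁾ and σ, assume additionally that σ(e) ∈ Z(R) = F·1. Then σ(R₁₁) ⊆ R₁₁ ⊕ Z(R) and σ(R₂₂) ⊆ R₂₂ ⊕ Z(R); that is, for every x ∈ R_ii (i = 1,2) there are a ∈ R_ii and λ ∈ F with σ(x) = a + λ·1. -/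
lemma aux_scalar {F : Type*} [Field F] {n : ℕ}
    (g s : Matrix (Fin n) (Fin n) F) (hg : g ≠ 0)
    (hcomm : ∀ z, s * z * g = g * z * s) : ∃ c : F, s = c • g := by
  have key : ∀ i k l j, s i k * g l j = g i k * s l j := by
    intro i k l j
    have h := congrFun (congrFun (hcomm (Matrix.single k l 1)) i) j
    simpa [Matrix.mul_apply, Matrix.single, Finset.sum_mul, ite_and,
      mul_comm, mul_left_comm] using h
  obtain ⟨i0, k0, h0⟩ : ∃ i k, g i k ≠ 0 := by
    by_contra h
    push_neg at h
    exact hg (by ext i j; simp [h])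
  refine ⟨s i0 k0 / g i0 k0, ?_⟩
  ext l j
  have hk := key i0 k0 l j
  simp only [Matrix.smul_apply, smul_eq_mul]
  rw [div_mul_eq_mul_div, eq_div_iff h0]
  linear_combination -hk

/-- Lemma 3.6: under the standing hypotheses and `σ(e) ∈ Z(R) = F·1`,
`σ(R₁₁) ⊆ R₁₁ ⊕ Z(R)` and `σ(R₂₂) ⊆ R₂₂ ⊕ Z(R)`, where `R₁₁ = eRe`,
`R₂₂ = (1-e)R(1-e)` and `Z(R) = F·1`. -/
theorem stmt_4 {F : Type*} [Field F] {p : ℕ} [CharP F p] (hp2 : p ≠ 2)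
    {n : ℕ} (hn : 2 ≤ n)
    (e : Matrix (Fin n) (Fin n) F) (he : e * e = e) (he0 : e ≠ 0) (he1 : e ≠ 1)
    (q : ℕ) (hq : 2 ≤ q)
    (D : ℕ → Matrix (Fin n) (Fin n) F →ₗ[F] Matrix (Fin n) (Fin n) F)
    (hD0 : D 0 = LinearMap.id)
    (hDe : ∀ k, 1 ≤ k → k ≤ q - 1 → D k e = 0)
    (hLeib : ∀ m, 1 ≤ m → m ≤ q - 1 → ∀ x y,
      D m (x * y) = ∑ k ∈ Finset.range (m + 1), D k x * D (m - k) y)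
    (hLie2 : ∀ x y, D q (x * y - y * x) =
      ∑ k ∈ Finset.range (q + 1), (D k x * D (q - k) y - D (q - k) y * D k x))
    (hLie3 : ∀ x y w, D q (x * (y * w - w * y) - (y * w - w * y) * x) =
      ∑ k ∈ Finset.range (q + 1), ∑ l ∈ Finset.range (q + 1 - k),
        (D k x * (D l y * D (q - k - l) w - D (q - k - l) w * D l y) -
          (D l y * D (q - k - l) w - D (q - k - l) w * D l y) * D k x))
    (hσe : ∃ c : F, D q e = c • (1 : Matrix (Fin n) (Fin n) F))
    :
    (∀ x, x = e * x * e → ∃ (a : Matrix (Fin n) (Fin n) F) (c : F),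
      a = e * a * e ∧ D q x = a + c • (1 : Matrix (Fin n) (Fin n) F)) ∧
    (∀ x, x = (1 - e) * x * (1 - e) → ∃ (a : Matrix (Fin n) (Fin n) F) (c : F),
      a = (1 - e) * a * (1 - e) ∧ D q x = a + c • (1 : Matrix (Fin n) (Fin n) F)) := by
  obtain ⟨c, hc⟩ := hσe
  -- basic idempotent facts
  have hef : e * (1 - e) = 0 := by rw [mul_sub, mul_one, he, sub_self]
  have hfe : (1 - e) * e = 0 := by rw [sub_mul, one_mul, he, sub_self]
  have hff : (1 - e) * (1 - e) = (1 : Matrix (Fin n) (Fin n) F) - e := by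
    rw [sub_mul, one_mul, hef, sub_zero]
  have hf0 : (1 : Matrix (Fin n) (Fin n) F) - e ≠ 0 := by
    intro h; exact he1 (sub_eq_zero.mp h).symm
  have he' : ∀ W : Matrix (Fin n) (Fin n) F, e * (e * W) = e * W := by
    intro W; rw [← mul_assoc, he]
  have hff' : ∀ W : Matrix (Fin n) (Fin n) F, (1 - e) * ((1 - e) * W) = (1 - e) * W := by
    intro W; rw [← mul_assoc, hff]
  -- Leibniz corollaries
  have hL : ∀ m, 1 ≤ m → m ≤ q - 1 → ∀ x, D m (e * x) = e * D m x := by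
    intro m h1 h2 x
    rw [hLeib m h1 h2, Finset.sum_range_succ']
    rw [Finset.sum_eq_zero (fun i hi => by
      rw [hDe (i + 1) (by omega) (by simp only [Finset.mem_range] at hi; omega), zero_mul])]
    simp [hD0]
  have hR : ∀ m, 1 ≤ m → m ≤ q - 1 → ∀ x, D m (x * e) = D m x * e := by
    intro m h1 h2 x
    rw [hLeib m h1 h2, Finset.sum_range_succ]
    rw [Finset.sum_eq_zero (fun i hi => by
      rw [hDe (m - i) (by simp only [Finset.mem_range] at hi; omega)
        (by simp only [Finset.mem_range] at hi; omega), mul_zero])]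
    simp [hD0]
  -- sums over {0, q}
  have hsub : ({0, q} : Finset ℕ) ⊆ Finset.range (q + 1) := by
    intro a ha
    simp only [Finset.mem_insert, Finset.mem_singleton] at ha
    simp only [Finset.mem_range]; omega
  have h0q : (0 : ℕ) ≠ q := by omega
  -- Step A
  have stepA : ∀ x, x * e = e * x → D q x * e = e * D q x := by
    intro x hxc
    have h := hLie2 x e
    rw [show x * e - e * x = 0 from by rw [hxc, sub_self], map_zero] at h
    rw [← Finset.sum_subset hsub (fun k hk hk2 => by
      simp only [Finset.mem_insert, Finset.mem_singleton, not_or] at hk2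
      simp only [Finset.mem_range] at hk
      rw [hDe (q - k) (by omega) (by omega), mul_zero, zero_mul, sub_self]),
      Finset.sum_pair h0q] at h
    simp only [hD0, LinearMap.id_coe, id_eq, Nat.sub_zero, Nat.sub_self, hc,
      mul_smul_comm, smul_mul_assoc, mul_one, one_mul, sub_self, zero_add] at h
    exact sub_eq_zero.mp h.symm
  -- Key identity from hLie2
  have key : ∀ x y, x * y - y * x = 0 →
      (∀ k, 1 ≤ k → k ≤ q - 1 → D k x * D (q - k) y - D (q - k) y * D k x = 0) →
      x * D q y - D q y * x + (D q x * y - y * D q x) = 0 := by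
    intro x y h0 hmid
    have h := hLie2 x y
    rw [h0, map_zero] at h
    rw [← Finset.sum_subset hsub (fun k hk hk2 => by
      simp only [Finset.mem_insert, Finset.mem_singleton, not_or] at hk2
      simp only [Finset.mem_range] at hk
      exact hmid k (by omega) (by omega)), Finset.sum_pair h0q] at h
    simp only [hD0, LinearMap.id_coe, id_eq, Nat.sub_zero, Nat.sub_self] at h
    exact h.symm
  constructor
  · -- case R₁₁
    intro x hx
    have hex : e * x = x := by
      conv_lhs => rw [hx]
      rw [← mul_assoc, ← mul_assoc, he, ← hx]
    have hxe : x * e = x := by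
      conv_lhs => rw [hx]
      rw [mul_assoc, he, ← hx]
    have hfx : (1 - e) * x = 0 := by rw [sub_mul, one_mul, hex, sub_self]
    have hxf : x * (1 - e) = 0 := by rw [mul_sub, mul_one, hxe, sub_self]
    have hDxL : ∀ k, 1 ≤ k → k ≤ q - 1 → e * D k x = D k x := by
      intro k h1 h2; conv_rhs => rw [← hex]
      rw [hL k h1 h2]
    have hDxR : ∀ k, 1 ≤ k → k ≤ q - 1 → D k x * e = D k x := by
      intro k h1 h2; conv_rhs => rw [← hxe]
      rw [hR k h1 h2]
    have hA : D q x * e = e * D q x := stepA x (by rw [hxe, hex])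
    -- decomposition
    have hdec : D q x = e * D q x * e + (1 - e) * D q x * (1 - e) := by
      have k1 : e * (D q x * e) = e * D q x := by rw [hA, ← mul_assoc, he]
      have expand : (1 - e) * D q x * (1 - e)
          = D q x - e * D q x - D q x * e + e * (D q x * e) := by noncomm_ring
      rw [expand, k1, mul_assoc e (D q x) e, k1, hA]
      abel
    -- inner commutation
    have inner : ∀ y, e * y = 0 → y * e = 0 →
        (1 - e) * (D q x * y) * (1 - e) = (1 - e) * (y * D q x) * (1 - e) := by
      intro y hey hye
      have hxy0 : x * y - y * x = 0 := by
        rw [show x * y = 0 from by rw [← hxe, mul_assoc, hey, mul_zero],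
          show y * x = 0 from by rw [← hex, ← mul_assoc, hye, zero_mul], sub_self]
      have hmid : ∀ k, 1 ≤ k → k ≤ q - 1 →
          D k x * D (q - k) y - D (q - k) y * D k x = 0 := by
        intro k h1 h2
        have hqk1 : 1 ≤ q - k := by omega
        have hqk2 : q - k ≤ q - 1 := by omega
        have hyL : e * D (q - k) y = 0 := by
          rw [← hL (q - k) hqk1 hqk2, hey, map_zero]
        have hyR : D (q - k) y * e = 0 := by
          rw [← hR (q - k) hqk1 hqk2, hye, map_zero]
        rw [show D k x * D (q - k) y = 0 from by
            rw [← hDxR k h1 h2, mul_assoc, hyL, mul_zero],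
          show D (q - k) y * D k x = 0 from by
            rw [← hDxL k h1 h2, ← mul_assoc, hyR, zero_mul], sub_self]
      have hk := key x y hxy0 hmid
      have h4 : D q x * y - y * D q x = D q y * x - x * D q y :=
        (eq_neg_of_add_eq_zero_right hk).trans (neg_sub _ _)
      have p1 : (1 - e) * (D q y * x) * (1 - e) = 0 := by
        rw [mul_assoc, mul_assoc, hxf, mul_zero, mul_zero]
      have p2 : (1 - e) * (x * D q y) * (1 - e) = 0 := by
        rw [← mul_assoc (1 - e) x (D q y), hfx, zero_mul, zero_mul]
      rw [← sub_eq_zero]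
      rw [show (1 - e) * (D q x * y) * (1 - e) - (1 - e) * (y * D q x) * (1 - e)
          = (1 - e) * (D q x * y - y * D q x) * (1 - e) from by noncomm_ring, h4]
      rw [show (1 - e) * (D q y * x - x * D q y) * (1 - e)
          = (1 - e) * (D q y * x) * (1 - e) - (1 - e) * (x * D q y) * (1 - e) from by
            noncomm_ring, p1, p2, sub_zero]
    have hcomm : ∀ z, ((1 - e) * D q x * (1 - e)) * z * (1 - e)
        = (1 - e) * z * ((1 - e) * D q x * (1 - e)) := by
      intro z
      have hey : e * ((1 - e) * z * (1 - e)) = 0 := by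
        rw [← mul_assoc, ← mul_assoc, hef, zero_mul, zero_mul]
      have hye : ((1 - e) * z * (1 - e)) * e = 0 := by
        rw [mul_assoc, hfe, mul_zero]
      have h7 := inner ((1 - e) * z * (1 - e)) hey hye
      simp only [mul_assoc, hff, hff'] at h7 ⊢
      exact h7
    obtain ⟨lam, hs⟩ := aux_scalar (1 - e) ((1 - e) * D q x * (1 - e)) hf0 hcomm
    refine ⟨e * D q x * e - lam • e, lam, ?_, ?_⟩
    · simp only [mul_sub, sub_mul, mul_smul_comm, smul_mul_assoc, mul_assoc, he, he']
    · conv_lhs => rw [hdec, hs]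
      rw [smul_sub]
      abel
  · -- case R₂₂
    intro x hx
    have hfx : (1 - e) * x = x := by
      conv_lhs => rw [hx]
      rw [← mul_assoc, ← mul_assoc, hff, ← hx]
    have hxf : x * (1 - e) = x := by
      conv_lhs => rw [hx]
      rw [mul_assoc, hff, ← hx]
    have hex : e * x = 0 := by rw [← hfx, ← mul_assoc, hef, zero_mul]
    have hxe : x * e = 0 := by rw [← hxf, mul_assoc, hfe, mul_zero]
    have hDxL : ∀ k, 1 ≤ k → k ≤ q - 1 → e * D k x = 0 := by
      intro k h1 h2; rw [← hL k h1 h2, hex, map_zero]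
    have hDxR : ∀ k, 1 ≤ k → k ≤ q - 1 → D k x * e = 0 := by
      intro k h1 h2; rw [← hR k h1 h2, hxe, map_zero]
    have hA : D q x * e = e * D q x := stepA x (by rw [hxe, hex])
    have hdec : D q x = e * D q x * e + (1 - e) * D q x * (1 - e) := by
      have k1 : e * (D q x * e) = e * D q x := by rw [hA, ← mul_assoc, he]
      have expand : (1 - e) * D q x * (1 - e)
          = D q x - e * D q x - D q x * e + e * (D q x * e) := by noncomm_ring
      rw [expand, k1, mul_assoc e (D q x) e, k1, hA]
      abel
    have inner : ∀ y, e * y = y → y * e = y →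
        e * (D q x * y) * e = e * (y * D q x) * e := by
      intro y hey hye
      have hxy0 : x * y - y * x = 0 := by
        rw [show x * y = 0 from by rw [← hey, ← mul_assoc, hxe, zero_mul],
          show y * x = 0 from by rw [← hye, mul_assoc, hex, mul_zero], sub_self]
      have hmid : ∀ k, 1 ≤ k → k ≤ q - 1 →
          D k x * D (q - k) y - D (q - k) y * D k x = 0 := by
        intro k h1 h2
        have hqk1 : 1 ≤ q - k := by omega
        have hqk2 : q - k ≤ q - 1 := by omega
        have hyL : e * D (q - k) y = D (q - k) y := by
          conv_rhs => rw [← hey]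
          rw [hL (q - k) hqk1 hqk2]
        have hyR : D (q - k) y * e = D (q - k) y := by
          conv_rhs => rw [← hye]
          rw [hR (q - k) hqk1 hqk2]
        rw [show D k x * D (q - k) y = 0 from by
            rw [← hyL, ← mul_assoc, hDxR k h1 h2, zero_mul],
          show D (q - k) y * D k x = 0 from by
            rw [← hyR, mul_assoc, hDxL k h1 h2, mul_zero], sub_self]
      have hk := key x y hxy0 hmid
      have h4 : D q x * y - y * D q x = D q y * x - x * D q y :=
        (eq_neg_of_add_eq_zero_right hk).trans (neg_sub _ _)
      have p1 : e * (D q y * x) * e = 0 := by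
        rw [mul_assoc, mul_assoc, hxe, mul_zero, mul_zero]
      have p2 : e * (x * D q y) * e = 0 := by
        rw [← mul_assoc e x (D q y), hex, zero_mul, zero_mul]
      rw [← sub_eq_zero]
      rw [show e * (D q x * y) * e - e * (y * D q x) * e
          = e * (D q x * y - y * D q x) * e from by noncomm_ring, h4]
      rw [show e * (D q y * x - x * D q y) * e
          = e * (D q y * x) * e - e * (x * D q y) * e from by noncomm_ring, p1, p2, sub_zero]
    have hcomm : ∀ z, (e * D q x * e) * z * e = e * z * (e * D q x * e) := by
      intro z
      have hey : e * (e * z * e) = e * z * e := by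
        rw [← mul_assoc, ← mul_assoc, he]
      have hye : (e * z * e) * e = e * z * e := by
        rw [mul_assoc, he]
      have h7 := inner (e * z * e) hey hye
      simp only [mul_assoc, he, he'] at h7 ⊢
      exact h7
    obtain ⟨mu, hs⟩ := aux_scalar e (e * D q x * e) he0 hcomm
    refine ⟨(1 - e) * D q x * (1 - e) - mu • (1 - e), mu, ?_, ?_⟩
    · have i1 : (1 - e) * ((1 - e) * D q x * (1 - e)) * (1 - e)
          = (1 - e) * D q x * (1 - e) := by
        rw [show (1 - e) * ((1 - e) * D q x * (1 - e)) * (1 - e)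
            = ((1 - e) * (1 - e)) * D q x * ((1 - e) * (1 - e)) from by noncomm_ring, hff]
      have i2 : (1 - e) * (mu • (1 - e)) * (1 - e) = mu • (1 - e) := by
        rw [mul_smul_comm, smul_mul_assoc, hff, hff]
      rw [mul_sub ((1 : Matrix (Fin n) (Fin n) F) - e)
            ((1 - e) * D q x * (1 - e)) (mu • (1 - e)),
        sub_mul ((1 - e) * ((1 - e) * D q x * (1 - e)))
            ((1 - e) * (mu • (1 - e))) (1 - e), i1, i2]
    · conv_lhs => rw [hdec, hs]
      rw [smul_sub]
      abel
end

section
/- (Lemma 3.7) Under the standing hypotheses on F, R, e, q, the maps δ⁽ᵏ⁾ and σ, assume additionally σ(e) ∈ Z(R) = F·1, and let τ, ζ : R → R be the unique F-linear maps with σ = τ + ζ, τ(R_ij) ⊆ R_ij for all i,j ∈ {1,2}, ζ(R) ⊆ Z(R), and ζ(R₁₂) = ζ(R₂₁) = 0. Then for all x ∈ R_ij with i ≠ j and all y ∈ R: τ(xyx) = τ(x)yx + xτ(y)x + xyτ(x) + Σ_{k+l+m=q, 0≤k,l,m<q} δ⁽ᵏ⁾(x)·δ⁽ˡ⁾(y)·δ⁽ᵐ⁾(x).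 -/
lemma auxD1 {F : Type*} [Field F] {n : ℕ} (q : ℕ)
    (D : ℕ → Matrix (Fin n) (Fin n) F →ₗ[F] Matrix (Fin n) (Fin n) F)
    (hD0 : D 0 = LinearMap.id)
    (hLeib : ∀ m, 1 ≤ m → m ≤ q - 1 → ∀ x y,
      D m (x * y) = ∑ k ∈ Finset.range (m + 1), D k x * D (m - k) y) :
    ∀ m, 1 ≤ m → m ≤ q - 1 → D m (1 : Matrix (Fin n) (Fin n) F) = 0 := by
  have hD0' : ∀ z : Matrix (Fin n) (Fin n) F, D 0 z = z := fun z => by rw [hD0]; rfl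
  intro m
  induction m using Nat.strong_induction_on with
  | _ m ih =>
    intro h1 h2
    have e : D m ((1 : Matrix (Fin n) (Fin n) F) * 1)
        = ∑ k ∈ Finset.range (m + 1), D k 1 * D (m - k) 1 := hLeib m h1 h2 1 1
    rw [one_mul, Finset.sum_range_succ,
      Finset.sum_eq_single_of_mem 0 (Finset.mem_range.2 (by omega))
        (fun j hj hj0 => by
          have hjm := Finset.mem_range.1 hj
          rw [ih j hjm (by omega) (by omega), zero_mul]),
      hD0', Nat.sub_zero, one_mul, Nat.sub_self, hD0', mul_one] at e
    -- e : D m 1 = D m 1 + D m 1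
    have h := congrArg (fun z => z - D m (1 : Matrix (Fin n) (Fin n) F)) e
    simpa using h.symm

lemma auxMain {F : Type*} [Field F] (h2 : (2 : F) ≠ 0) {n : ℕ} (q : ℕ) (hq : 2 ≤ q)
    (D : ℕ → Matrix (Fin n) (Fin n) F →ₗ[F] Matrix (Fin n) (Fin n) F)
    (hD0 : D 0 = LinearMap.id)
    (hLeib : ∀ m, 1 ≤ m → m ≤ q - 1 → ∀ x y,
      D m (x * y) = ∑ k ∈ Finset.range (m + 1), D k x * D (m - k) y)
    (hLie3 : ∀ x y w, D q (x * (y * w - w * y) - (y * w - w * y) * x) =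
      ∑ k ∈ Finset.range (q + 1), ∑ l ∈ Finset.range (q + 1 - k),
        (D k x * (D l y * D (q - k - l) w - D (q - k - l) w * D l y) -
          (D l y * D (q - k - l) w - D (q - k - l) w * D l y) * D k x))
    (τ ζ : Matrix (Fin n) (Fin n) F →ₗ[F] Matrix (Fin n) (Fin n) F)
    (hsum : ∀ x, D q x = τ x + ζ x)
    (hζZ : ∀ x, ∃ c : F, ζ x = c • (1 : Matrix (Fin n) (Fin n) F))
    (f : Matrix (Fin n) (Fin n) F) (hf : f * f = f)
    (hDf : ∀ k, 1 ≤ k → k ≤ q - 1 → D k f = 0)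
    (hτf : ∀ x, x = f * x * (1 - f) → τ x = f * τ x * (1 - f))
    (hζf : ∀ x, x = f * x * (1 - f) → ζ x = 0)
    (x : Matrix (Fin n) (Fin n) F) (hx : x = f * x * (1 - f))
    (y : Matrix (Fin n) (Fin n) F) :
    τ (x * y * x) = τ x * y * x + x * τ y * x + x * y * τ x +
      ∑ k ∈ Finset.range q, ∑ l ∈ Finset.range q,
        (if 1 ≤ k + l ∧ k + l ≤ q then D k x * D l y * D (q - k - l) x else 0) := by
  have hD0' : ∀ z : Matrix (Fin n) (Fin n) F, D 0 z = z := fun z => by rw [hD0]; rfl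
  set g : Matrix (Fin n) (Fin n) F := 1 - f with hg
  have hgf : g * f = 0 := by rw [hg, sub_mul, one_mul, hf, sub_self]
  have hgg : g * g = g := by rw [hg, mul_sub, mul_one, sub_mul, one_mul, hf]; abel
  have hD1 := auxD1 q D hD0 hLeib
  have hDg : ∀ m, 1 ≤ m → m ≤ q - 1 → D m g = 0 := fun m h1 h2' => by
    rw [hg, map_sub, hD1 m h1 h2', hDf m h1 h2', sub_self]
  have hζx : ζ x = 0 := hζf x hx
  have hqx : D q x = τ x := by rw [hsum, hζx, add_zero]
  have hτx : τ x = f * τ x * g := hτf x hx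
  have hX : ∀ k, k ≤ q → D k x = f * D k x * g := by
    intro k hk
    rcases eq_or_lt_of_le hk with rfl | hlt
    · rw [hqx]; exact hτx
    rcases Nat.eq_zero_or_pos k with rfl | hk0
    · rw [hD0']; exact hx
    have hk1 : k ≤ q - 1 := by omega
    have e1 : D k (f * x * g) = D k (f * x) * g := by
      rw [hLeib k hk0 hk1 (f * x) g,
        Finset.sum_eq_single_of_mem k (Finset.self_mem_range_succ k)
          (fun j hj hjk => by
            have hjm := Finset.mem_range.1 hj
            rw [hDg (k - j) (by omega) (by omega), mul_zero]),
        Nat.sub_self, hD0']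
    have e2 : D k (f * x) = f * D k x := by
      rw [hLeib k hk0 hk1 f x,
        Finset.sum_eq_single_of_mem 0 (Finset.mem_range.2 (by omega))
          (fun j hj hj0 => by
            have hjm := Finset.mem_range.1 hj
            rw [hDf j (by omega) (by omega), zero_mul]),
        hD0', Nat.sub_zero]
    calc D k x = D k (f * x * g) := by rw [← hx]
    _ = D k (f * x) * g := e1
    _ = f * D k x * g := by rw [e2]
  have hXX : ∀ k m, k ≤ q → m ≤ q → D k x * D m x = 0 := by
    intro k m hk hm
    rw [hX k hk, hX m hm,
      show f * D k x * g * (f * D m x * g) = f * D k x * (g * f) * (D m x * g) from by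
        noncomm_ring,
      hgf, mul_zero, zero_mul]
  have hxx0 : x * x = 0 := by
    have h := hXX 0 0 (by omega) (by omega)
    rwa [hD0'] at h
  have hfx : f * x = x := by
    calc f * x = f * (f * x * g) := by rw [← hx]
    _ = f * f * x * g := by noncomm_ring
    _ = f * x * g := by rw [hf]
    _ = x := hx.symm
  have hxg : x * g = x := by
    calc x * g = (f * x * g) * g := by rw [← hx]
    _ = f * x * (g * g) := by noncomm_ring
    _ = f * x * g := by rw [hgg]
    _ = x := hx.symm
  have hxyx : x * y * x = f * (x * y * x) * g := by
    calc x * y * x = (f * x) * y * (x * g) := by rw [hfx, hxg]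
    _ = f * (x * y * x) * g := by noncomm_ring
  have hτxyx : D q (x * y * x) = τ (x * y * x) := by
    rw [hsum, hζf _ hxyx, add_zero]
  -- the main identity from hLie3
  have key := hLie3 x y x
  have lhs_eq : x * (y * x - x * y) - (y * x - x * y) * x = x * y * x + x * y * x := by
    have h : x * (y * x - x * y) - (y * x - x * y) * x
        = x * y * x + x * y * x - (x * x * y + y * (x * x)) := by noncomm_ring
    rw [h, hxx0]
    simp
  rw [lhs_eq, map_add] at key
  have term_eq : ∀ k ∈ Finset.range (q + 1), ∀ l ∈ Finset.range (q + 1 - k),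
      (D k x * (D l y * D (q - k - l) x - D (q - k - l) x * D l y) -
        (D l y * D (q - k - l) x - D (q - k - l) x * D l y) * D k x)
      = D k x * D l y * D (q - k - l) x + D (q - k - l) x * D l y * D k x := by
    intro k hk l hl
    have hk' : k ≤ q := by have := Finset.mem_range.1 hk; omega
    have hm' : q - k - l ≤ q := by omega
    have h : (D k x * (D l y * D (q - k - l) x - D (q - k - l) x * D l y) -
        (D l y * D (q - k - l) x - D (q - k - l) x * D l y) * D k x)
        = D k x * D l y * D (q - k - l) x + D (q - k - l) x * D l y * D k x
          - D k x * D (q - k - l) x * D l y - D l y * (D (q - k - l) x * D k x) := by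
      noncomm_ring
    rw [h, hXX k (q - k - l) hk' hm', hXX (q - k - l) k hm' hk', zero_mul, mul_zero,
      sub_zero, sub_zero]
  have key2 : D q (x * y * x) + D q (x * y * x)
      = (∑ k ∈ Finset.range (q + 1), ∑ l ∈ Finset.range (q + 1 - k),
          D k x * D l y * D (q - k - l) x)
        + ∑ k ∈ Finset.range (q + 1), ∑ l ∈ Finset.range (q + 1 - k),
          D (q - k - l) x * D l y * D k x := by
    rw [key, ← Finset.sum_add_distrib]
    exact Finset.sum_congr rfl fun k hk => by
      rw [← Finset.sum_add_distrib]
      exact Finset.sum_congr rfl fun l hl => term_eq k hk l hl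
  have conv : ∀ B : ℕ → ℕ → Matrix (Fin n) (Fin n) F,
      (∑ k ∈ Finset.range (q + 1), ∑ l ∈ Finset.range (q + 1 - k), B k l)
      = ∑ k ∈ Finset.range (q + 1), ∑ l ∈ Finset.range (q + 1),
          (if k + l ≤ q then B k l else 0) := by
    intro B
    refine Finset.sum_congr rfl fun k hk => ?_
    have hk' : k < q + 1 := Finset.mem_range.1 hk
    calc (∑ l ∈ Finset.range (q + 1 - k), B k l)
        = ∑ l ∈ Finset.range (q + 1 - k), (if k + l ≤ q then B k l else 0) :=
          Finset.sum_congr rfl fun l hl => by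
            have := Finset.mem_range.1 hl
            rw [if_pos (by omega)]
    _ = ∑ l ∈ Finset.range (q + 1), (if k + l ≤ q then B k l else 0) :=
          Finset.sum_subset (Finset.range_subset_range.2 (by omega)) fun l hl hl' => by
            have h1 := Finset.mem_range.1 hl
            have h3 : ¬ l < q + 1 - k := fun h => hl' (Finset.mem_range.2 h)
            rw [if_neg (by omega)]
  have shrink : ∀ (l : ℕ), l ≤ q → ∀ B : ℕ → Matrix (Fin n) (Fin n) F,
      (∑ k ∈ Finset.range (q + 1), if k + l ≤ q then B k else 0)
      = ∑ k ∈ Finset.range (q - l + 1), B k := by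
    intro l hl B
    calc (∑ k ∈ Finset.range (q + 1), if k + l ≤ q then B k else 0)
        = ∑ k ∈ Finset.range (q - l + 1), (if k + l ≤ q then B k else 0) :=
          (Finset.sum_subset (Finset.range_subset_range.2 (by omega)) (fun k hk hk' => by
            have h1 := Finset.mem_range.1 hk
            have h3 : ¬ k < q - l + 1 := fun h => hk' (Finset.mem_range.2 h)
            rw [if_neg (by omega)])).symm
    _ = ∑ k ∈ Finset.range (q - l + 1), B k :=
          Finset.sum_congr rfl fun k hk => by
            have := Finset.mem_range.1 hk
            rw [if_pos (by omega)]
  have reidx :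
      (∑ k ∈ Finset.range (q + 1), ∑ l ∈ Finset.range (q + 1 - k),
        D (q - k - l) x * D l y * D k x)
      = ∑ k ∈ Finset.range (q + 1), ∑ l ∈ Finset.range (q + 1 - k),
        D k x * D l y * D (q - k - l) x := by
    rw [conv fun k l => D (q - k - l) x * D l y * D k x,
      conv fun k l => D k x * D l y * D (q - k - l) x]
    calc (∑ k ∈ Finset.range (q + 1), ∑ l ∈ Finset.range (q + 1),
          if k + l ≤ q then D (q - k - l) x * D l y * D k x else 0)
        = ∑ l ∈ Finset.range (q + 1), ∑ k ∈ Finset.range (q + 1),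
          (if k + l ≤ q then D (q - k - l) x * D l y * D k x else 0) := Finset.sum_comm
    _ = ∑ l ∈ Finset.range (q + 1), ∑ k ∈ Finset.range (q + 1),
          (if k + l ≤ q then D k x * D l y * D (q - k - l) x else 0) := by
        refine Finset.sum_congr rfl fun l hl => ?_
        have hl' : l ≤ q := by have := Finset.mem_range.1 hl; omega
        rw [shrink l hl', shrink l hl']
        refine Finset.sum_nbij' (fun k => q - l - k) (fun k => q - l - k) ?_ ?_ ?_ ?_ ?_
        · intro a ha
          simp only [Finset.mem_range] at ha ⊢
          omega
        · intro a ha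
          simp only [Finset.mem_range] at ha ⊢
          omega
        · intro a ha
          simp only [Finset.mem_range] at ha
          omega
        · intro a ha
          simp only [Finset.mem_range] at ha
          omega
        · intro a ha
          simp only [Finset.mem_range] at ha
          rw [show q - (q - l - a) - l = a from by omega, show q - l - a = q - a - l from by omega]
    _ = ∑ k ∈ Finset.range (q + 1), ∑ l ∈ Finset.range (q + 1),
          (if k + l ≤ q then D k x * D l y * D (q - k - l) x else 0) := Finset.sum_comm
  have bsplit :
      (∑ k ∈ Finset.range (q + 1), ∑ l ∈ Finset.range (q + 1 - k),
        D k x * D l y * D (q - k - l) x)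
      = D q x * y * x + x * D q y * x + x * y * D q x +
        ∑ k ∈ Finset.range q, ∑ l ∈ Finset.range q,
          (if 1 ≤ k + l ∧ k + l ≤ q then D k x * D l y * D (q - k - l) x else 0) := by
    rw [conv fun k l => D k x * D l y * D (q - k - l) x, Finset.sum_range_succ]
    have hlast : (∑ l ∈ Finset.range (q + 1),
        if q + l ≤ q then D q x * D l y * D (q - q - l) x else 0) = D q x * y * x := by
      rw [Finset.sum_eq_single_of_mem 0 (Finset.mem_range.2 (by omega))
        (fun l hl hl0 => if_neg (by omega)), if_pos (by omega)]
      simp [hD0']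
    rw [hlast]
    have hinner : ∀ k ∈ Finset.range q,
        (∑ l ∈ Finset.range (q + 1), if k + l ≤ q then D k x * D l y * D (q - k - l) x else 0)
        = (∑ l ∈ Finset.range q, if k + l ≤ q then D k x * D l y * D (q - k - l) x else 0)
          + (if k = 0 then x * D q y * x else 0) := by
      intro k hk
      rw [Finset.sum_range_succ]
      congr 1
      by_cases hk0 : k = 0
      · subst hk0
        rw [if_pos (by omega), if_pos rfl]
        simp [hD0']
      · rw [if_neg (by omega), if_neg hk0]
    rw [Finset.sum_congr rfl hinner, Finset.sum_add_distrib,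
      Finset.sum_eq_single_of_mem 0 (Finset.mem_range.2 (by omega))
        (fun k hk hk0 => if_neg hk0), if_pos rfl]
    have hsplit2 : ∀ k ∈ Finset.range q, ∀ l ∈ Finset.range q,
        (if k + l ≤ q then D k x * D l y * D (q - k - l) x else 0)
        = (if 1 ≤ k + l ∧ k + l ≤ q then D k x * D l y * D (q - k - l) x else 0)
          + (if k = 0 ∧ l = 0 then x * y * D q x else 0) := by
      intro k hk l hl
      by_cases h00 : k = 0 ∧ l = 0
      · obtain ⟨rfl, rfl⟩ := h00
        rw [if_pos (by omega), if_neg (by omega), if_pos ⟨rfl, rfl⟩, zero_add]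
        simp [hD0']
      · rw [if_neg h00, add_zero]
        by_cases hle : k + l ≤ q
        · rw [if_pos hle, if_pos ⟨by omega, hle⟩]
        · rw [if_neg hle, if_neg (by tauto)]
    rw [Finset.sum_congr rfl (fun k hk => Finset.sum_congr rfl (fun l hl => hsplit2 k hk l hl))]
    have hdistrib : (∑ k ∈ Finset.range q, ∑ l ∈ Finset.range q,
        ((if 1 ≤ k + l ∧ k + l ≤ q then D k x * D l y * D (q - k - l) x else 0)
          + (if k = 0 ∧ l = 0 then x * y * D q x else 0)))
        = (∑ k ∈ Finset.range q, ∑ l ∈ Finset.range q,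
            (if 1 ≤ k + l ∧ k + l ≤ q then D k x * D l y * D (q - k - l) x else 0))
          + ∑ k ∈ Finset.range q, ∑ l ∈ Finset.range q,
            (if k = 0 ∧ l = 0 then x * y * D q x else 0) := by
      rw [← Finset.sum_add_distrib]
      exact Finset.sum_congr rfl fun k hk => by rw [← Finset.sum_add_distrib]
    rw [hdistrib]
    have h00sum : (∑ k ∈ Finset.range q, ∑ l ∈ Finset.range q,
        if k = 0 ∧ l = 0 then x * y * D q x else 0) = x * y * D q x := by
      rw [Finset.sum_eq_single_of_mem 0 (Finset.mem_range.2 (by omega))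
        (fun k hk hk0 => Finset.sum_eq_zero fun l hl => if_neg (by tauto)),
        Finset.sum_eq_single_of_mem 0 (Finset.mem_range.2 (by omega))
        (fun l hl hl0 => if_neg (by tauto)), if_pos ⟨rfl, rfl⟩]
    rw [h00sum]
    abel
  rw [reidx, bsplit, hτxyx] at key2
  obtain ⟨c, hc⟩ := hζZ y
  have hDqy : x * D q y * x = x * τ y * x := by
    rw [hsum y, hc, mul_add, add_mul, mul_smul_comm, mul_one, smul_mul_assoc, hxx0,
      smul_zero, add_zero]
  rw [hqx, hDqy] at key2
  have h2' : (2 : F) • τ (x * y * x)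
      = (2 : F) • (τ x * y * x + x * τ y * x + x * y * τ x +
        ∑ k ∈ Finset.range q, ∑ l ∈ Finset.range q,
          (if 1 ≤ k + l ∧ k + l ≤ q then D k x * D l y * D (q - k - l) x else 0)) := by
    rw [two_smul, two_smul]
    exact key2
  exact smul_right_injective _ h2 h2'

/-- Lemma 3.7: with `σ = τ + ζ` as in the text, for all `x ∈ R₁₂ ∪ R₂₁` and all `y ∈ R`,
`τ(xyx) = τ(x)yx + xτ(y)x + xyτ(x) + Σ_{k+l+m=q, 0≤k,l,m<q} δ⁽ᵏ⁾(x) δ⁽ˡ⁾(y) δ⁽ᵐ⁾(x)`. -/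
theorem stmt_5 {F : Type*} [Field F] {p : ℕ} [CharP F p] (hp2 : p ≠ 2)
    {n : ℕ} (hn : 2 ≤ n)
    (e : Matrix (Fin n) (Fin n) F) (he : e * e = e) (he0 : e ≠ 0) (he1 : e ≠ 1)
    (q : ℕ) (hq : 2 ≤ q)
    (D : ℕ → Matrix (Fin n) (Fin n) F →ₗ[F] Matrix (Fin n) (Fin n) F)
    (hD0 : D 0 = LinearMap.id)
    (hDe : ∀ k, 1 ≤ k → k ≤ q - 1 → D k e = 0)
    (hLeib : ∀ m, 1 ≤ m → m ≤ q - 1 → ∀ x y,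
      D m (x * y) = ∑ k ∈ Finset.range (m + 1), D k x * D (m - k) y)
    (hLie2 : ∀ x y, D q (x * y - y * x) =
      ∑ k ∈ Finset.range (q + 1), (D k x * D (q - k) y - D (q - k) y * D k x))
    (hLie3 : ∀ x y w, D q (x * (y * w - w * y) - (y * w - w * y) * x) =
      ∑ k ∈ Finset.range (q + 1), ∑ l ∈ Finset.range (q + 1 - k),
        (D k x * (D l y * D (q - k - l) w - D (q - k - l) w * D l y) -
          (D l y * D (q - k - l) w - D (q - k - l) w * D l y) * D k x))
    (hσe : ∃ c : F, D q e = c • (1 : Matrix (Fin n) (Fin n) F))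
    (τ ζ : Matrix (Fin n) (Fin n) F →ₗ[F] Matrix (Fin n) (Fin n) F)
    (hsum : ∀ x, D q x = τ x + ζ x)
    (hτ : ∀ f ∈ ({e, 1 - e} : Set (Matrix (Fin n) (Fin n) F)),
      ∀ f' ∈ ({e, 1 - e} : Set (Matrix (Fin n) (Fin n) F)),
      ∀ x, x = f * x * f' → τ x = f * τ x * f')
    (hζZ : ∀ x, ∃ c : F, ζ x = c • (1 : Matrix (Fin n) (Fin n) F))
    (hζ12 : ∀ x, x = e * x * (1 - e) → ζ x = 0)
    (hζ21 : ∀ x, x = (1 - e) * x * e → ζ x = 0)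
    :
    ∀ x, (x = e * x * (1 - e) ∨ x = (1 - e) * x * e) → ∀ y,
      τ (x * y * x) = τ x * y * x + x * τ y * x + x * y * τ x +
        ∑ k ∈ Finset.range q, ∑ l ∈ Finset.range q,
          (if 1 ≤ k + l ∧ k + l ≤ q then D k x * D l y * D (q - k - l) x else 0) := by
  have h2 : (2 : F) ≠ 0 := by
    have hp1 : p ≠ 1 := CharP.char_ne_one F p
    intro h
    have hd : (p : ℕ) ∣ 2 := by
      have h' : ((2 : ℕ) : F) = 0 := by exact_mod_cast h
      exact (CharP.cast_eq_zero_iff F p 2).1 h'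
    rcases (Nat.prime_two.eq_one_or_self_of_dvd p hd) with h1 | h1
    · exact hp1 h1
    · exact hp2 h1
  have hD1 := auxD1 q D hD0 hLeib
  intro x hx y
  rcases hx with hx | hx
  · exact auxMain h2 q hq D hD0 hLeib hLie3 τ ζ hsum hζZ e he hDe
      (fun x' hx' => hτ e (by simp) (1 - e) (by simp) x' hx') hζ12 x hx y
  · have he' : (1 - e) * (1 - e) = 1 - e := by
      rw [show (1 - e) * (1 - e) = 1 - e - e + e * e from by noncomm_ring, he]
      abel
    have hDe' : ∀ k, 1 ≤ k → k ≤ q - 1 → D k (1 - e) = 0 := fun k h1 h2' => by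
      rw [map_sub, hD1 k h1 h2', hDe k h1 h2', sub_self]
    have hx' : x = (1 - e) * x * (1 - (1 - e)) := by rwa [sub_sub_cancel]
    exact auxMain h2 q hq D hD0 hLeib hLie3 τ ζ hsum hζZ (1 - e) he' hDe'
      (fun x' hx2 => by
        have h := hτ (1 - e) (by simp) e (by simp) x' (by rwa [sub_sub_cancel] at hx2)
        rwa [sub_sub_cancel])
      (fun x' hx2 => hζ21 x' (by rwa [sub_sub_cancel] at hx2))
      x hx' y
end

section
/- (Lemma 3.8) Under the standing hypotheses on F, R, e, q, the maps δ⁽ᵏ⁾ and σ, assume additionally σ(e) ∈ Z(R) = F·1, and let τ, ζ : R → R be the unique F-linear maps with σ = τ + ζ, τ(R_ij) ⊆ R_ij for all i,j ∈ {1,2}, ζ(R) ⊆ Z(R), and ζ(R₁₂) = ζ(R₂₁) = 0. Then for all x ∈ R_ii and y ∈ R_jk with j ≠ k (i,j,k ∈ {1,2}): τ(xy) = τ(x)y + xτ(y) + Σ_{k'=1}^{q−1} δ⁽ᵏ'⁾(x)·δ⁽q−k'⁾(y). -/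
/-- Lemma 3.8: with `σ = τ + ζ` as in the text, for all `x ∈ R_ii` and `y ∈ R_jk` with
`j ≠ k`, `τ(xy) = τ(x)y + xτ(y) + Σ_{k'=1}^{q-1} δ⁽ᵏ'⁾(x) δ⁽q-k'⁾(y)`. -/
theorem stmt_6 {F : Type*} [Field F] {p : ℕ} [CharP F p] (hp2 : p ≠ 2)
    {n : ℕ} (hn : 2 ≤ n)
    (e : Matrix (Fin n) (Fin n) F) (he : e * e = e) (he0 : e ≠ 0) (he1 : e ≠ 1)
    (q : ℕ) (hq : 2 ≤ q)
    (D : ℕ → Matrix (Fin n) (Fin n) F →ₗ[F] Matrix (Fin n) (Fin n) F)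
    (hD0 : D 0 = LinearMap.id)
    (hDe : ∀ k, 1 ≤ k → k ≤ q - 1 → D k e = 0)
    (hLeib : ∀ m, 1 ≤ m → m ≤ q - 1 → ∀ x y,
      D m (x * y) = ∑ k ∈ Finset.range (m + 1), D k x * D (m - k) y)
    (hLie2 : ∀ x y, D q (x * y - y * x) =
      ∑ k ∈ Finset.range (q + 1), (D k x * D (q - k) y - D (q - k) y * D k x))
    (hLie3 : ∀ x y w, D q (x * (y * w - w * y) - (y * w - w * y) * x) =
      ∑ k ∈ Finset.range (q + 1), ∑ l ∈ Finset.range (q + 1 - k),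
        (D k x * (D l y * D (q - k - l) w - D (q - k - l) w * D l y) -
          (D l y * D (q - k - l) w - D (q - k - l) w * D l y) * D k x))
    (hσe : ∃ c : F, D q e = c • (1 : Matrix (Fin n) (Fin n) F))
    (τ ζ : Matrix (Fin n) (Fin n) F →ₗ[F] Matrix (Fin n) (Fin n) F)
    (hsum : ∀ x, D q x = τ x + ζ x)
    (hτ : ∀ f ∈ ({e, 1 - e} : Set (Matrix (Fin n) (Fin n) F)),
      ∀ f' ∈ ({e, 1 - e} : Set (Matrix (Fin n) (Fin n) F)),
      ∀ x, x = f * x * f' → τ x = f * τ x * f')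
    (hζZ : ∀ x, ∃ c : F, ζ x = c • (1 : Matrix (Fin n) (Fin n) F))
    (hζ12 : ∀ x, x = e * x * (1 - e) → ζ x = 0)
    (hζ21 : ∀ x, x = (1 - e) * x * e → ζ x = 0)
    :
    ∀ x, (x = e * x * e ∨ x = (1 - e) * x * (1 - e)) →
    ∀ y, (y = e * y * (1 - e) ∨ y = (1 - e) * y * e) →
      τ (x * y) = τ x * y + x * τ y +
        ∑ k ∈ Finset.Icc 1 (q - 1), D k x * D (q - k) y := by
  have hef : e * (1 - e) = 0 := by rw [mul_sub, mul_one, he, sub_self]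
  have hfe : (1 - e) * e = 0 := by rw [sub_mul, one_mul, he, sub_self]
  have hidem : ∀ f ∈ ({e, 1 - e} : Set (Matrix (Fin n) (Fin n) F)), f * f = f := by
    rintro f (rfl | rfl)
    · exact he
    · rw [sub_mul, one_mul, mul_sub, mul_one, he]; abel
  -- lateral absorption
  have hlat : ∀ f f' z : Matrix (Fin n) (Fin n) F, f * f = f → f' * f' = f' → z = f * z * f' →
      f * z = z ∧ z * f' = z := by
    intro f f' z hf hf' hz
    constructor
    · conv_lhs => rw [hz]
      rw [← mul_assoc, ← mul_assoc, hf]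
      exact hz.symm
    · conv_lhs => rw [hz]
      rw [mul_assoc, hf']
      exact hz.symm
  have hmul0 : ∀ a b u v : Matrix (Fin n) (Fin n) F, u * v = 0 → a * u = a → v * b = b → a * b = 0 := by
    intro a b u v huv ha hb
    calc a * b = (a * u) * (v * b) := by rw [ha, hb]
      _ = a * (u * v) * b := by rw [mul_assoc, ← mul_assoc u, ← mul_assoc]
      _ = 0 := by rw [huv, mul_zero, zero_mul]
  -- D m respects multiplication by e on the left/right
  have hDleft : ∀ m, 1 ≤ m → m ≤ q - 1 → ∀ z, D m (e * z) = e * D m z := by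
    intro m h1 h2 z
    rw [hLeib m h1 h2 e z, Finset.sum_eq_single 0]
    · simp [hD0]
    · intro b hb hb0
      have hbm := Finset.mem_range.mp hb
      rw [hDe b (by omega) (by omega), zero_mul]
    · intro h; exact absurd (Finset.mem_range.mpr (by omega)) h
  have hDright : ∀ m, 1 ≤ m → m ≤ q - 1 → ∀ z, D m (z * e) = D m z * e := by
    intro m h1 h2 z
    rw [hLeib m h1 h2 z e, Finset.sum_eq_single m]
    · simp [hD0]
    · intro b hb hb0
      have hbm := Finset.mem_range.mp hb
      rw [hDe (m - b) (by omega) (by omega), mul_zero]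
    · intro h; exact absurd (Finset.mem_range.mpr (by omega)) h
  have hDleftS : ∀ f ∈ ({e, 1 - e} : Set (Matrix (Fin n) (Fin n) F)), ∀ m, 1 ≤ m → m ≤ q - 1 → ∀ z,
      D m (f * z) = f * D m z := by
    rintro f (rfl | rfl) m h1 h2 z
    · exact hDleft m h1 h2 z
    · rw [sub_mul, one_mul, sub_mul, one_mul, map_sub, hDleft m h1 h2 z]
  have hDrightS : ∀ f ∈ ({e, 1 - e} : Set (Matrix (Fin n) (Fin n) F)), ∀ m, 1 ≤ m → m ≤ q - 1 → ∀ z,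
      D m (z * f) = D m z * f := by
    rintro f (rfl | rfl) m h1 h2 z
    · exact hDright m h1 h2 z
    · rw [mul_sub, mul_one, mul_sub, mul_one, map_sub, hDright m h1 h2 z]
  have hDinv : ∀ m, 1 ≤ m → m ≤ q - 1 → ∀ f ∈ ({e, 1 - e} : Set (Matrix (Fin n) (Fin n) F)),
      ∀ f' ∈ ({e, 1 - e} : Set (Matrix (Fin n) (Fin n) F)), ∀ z : Matrix (Fin n) (Fin n) F, z = f * z * f' → D m z = f * D m z * f' := by
    intro m h1 h2 f hf f' hf' z hz
    obtain ⟨h3, h4⟩ := hlat f f' z (hidem f hf) (hidem f' hf') hz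
    have l1 : f * D m z = D m z := by
      have := hDleftS f hf m h1 h2 z; rw [h3] at this; exact this.symm
    have l2 : D m z * f' = D m z := by
      have := hDrightS f' hf' m h1 h2 z; rw [h4] at this; exact this.symm
    calc D m z = f * D m z := l1.symm
      _ = f * (D m z * f') := by rw [l2]
      _ = f * D m z * f' := by rw [← mul_assoc]
  -- splitting a range sum
  have hsplit : ∀ g : ℕ → Matrix (Fin n) (Fin n) F, ∑ k ∈ Finset.range (q + 1), g k
      = g 0 + (∑ k ∈ Finset.Icc 1 (q - 1), g k) + g q := by
    intro g
    rw [Finset.sum_range_succ]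
    congr 1
    obtain ⟨m, rfl⟩ : ∃ m, q = m + 1 := ⟨q - 1, by omega⟩
    rw [Finset.sum_range_succ', add_comm]
    congr 1
    rw [← Finset.Ico_add_one_right_eq_Icc, Finset.sum_Ico_eq_sum_range]
    simp only [Nat.add_sub_cancel]
    exact Finset.sum_congr rfl fun i _ => by rw [add_comm]
  -- the orthogonal (zero) case
  have zkey : ∀ g ∈ ({e, 1 - e} : Set (Matrix (Fin n) (Fin n) F)), ∀ f ∈ ({e, 1 - e} : Set (Matrix (Fin n) (Fin n) F)),
      ∀ f' ∈ ({e, 1 - e} : Set (Matrix (Fin n) (Fin n) F)), g * f = 0 →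
      ∀ x, x = g * x * g → ∀ y, y = f * y * f' →
      τ (x * y) = τ x * y + x * τ y + ∑ k ∈ Finset.Icc 1 (q - 1), D k x * D (q - k) y := by
    intro g hg f hf f' hf' hgf x hx y hy
    obtain ⟨hx1, hx2⟩ := hlat g g x (hidem g hg) (hidem g hg) hx
    obtain ⟨hy1, hy2⟩ := hlat f f' y (hidem f hf) (hidem f' hf') hy
    have hxy : x * y = 0 := hmul0 x y g f hgf hx2 hy1
    rw [hxy, map_zero]
    have h1 : τ x * y = 0 :=
      hmul0 _ _ g f hgf
        (hlat g g (τ x) (hidem g hg) (hidem g hg) (hτ g hg g hg x hx)).2 hy1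
    have h2 : x * τ y = 0 :=
      hmul0 _ _ g f hgf hx2
        (hlat f f' (τ y) (hidem f hf) (hidem f' hf') (hτ f hf f' hf' y hy)).1
    have h3 : ∀ k ∈ Finset.Icc 1 (q - 1), D k x * D (q - k) y = 0 := by
      intro k hk
      have hk' := Finset.mem_Icc.mp hk
      have hdx := hDinv k hk'.1 hk'.2 g hg g hg x hx
      have hdy := hDinv (q - k) (by omega) (by omega) f hf f' hf' y hy
      exact hmul0 _ _ g f hgf
        (hlat g g _ (hidem g hg) (hidem g hg) hdx).2
        (hlat f f' _ (hidem f hf) (hidem f' hf') hdy).1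
    rw [h1, h2, Finset.sum_eq_zero h3]; simp
  -- the main (Lie) case
  have key : ∀ f ∈ ({e, 1 - e} : Set (Matrix (Fin n) (Fin n) F)), ∀ f' ∈ ({e, 1 - e} : Set (Matrix (Fin n) (Fin n) F)),
      f * f' = 0 → f' * f = 0 → (∀ z, z = f * z * f' → ζ z = 0) →
      ∀ x, x = f * x * f → ∀ y, y = f * y * f' →
      τ (x * y) = τ x * y + x * τ y + ∑ k ∈ Finset.Icc 1 (q - 1), D k x * D (q - k) y := by
    intro f hf f' hf' hff' hf'f hζ0 x hx y hy
    obtain ⟨hx1, hx2⟩ := hlat f f x (hidem f hf) (hidem f hf) hx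
    obtain ⟨hy1, hy2⟩ := hlat f f' y (hidem f hf) (hidem f' hf') hy
    have hyx : y * x = 0 := hmul0 y x f' f hf'f hy2 hx1
    have hxyP : x * y = f * (x * y) * f' := by
      calc x * y = (f * x) * (y * f') := by rw [hx1, hy2]
        _ = f * (x * y) * f' := by rw [mul_assoc, ← mul_assoc x y f', ← mul_assoc]
    have hζxy : ζ (x * y) = 0 := hζ0 _ hxyP
    have hτxy : τ (x * y) = D q (x * y) := by rw [hsum (x * y), hζxy, add_zero]
    have hτyx0 : τ y * x = 0 :=
      hmul0 _ _ f' f hf'f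
        (hlat f f' (τ y) (hidem f hf) (hidem f' hf') (hτ f hf f' hf' y hy)).2 hx1
    have hyτx0 : y * τ x = 0 :=
      hmul0 _ _ f' f hf'f hy2
        (hlat f f (τ x) (hidem f hf) (hidem f hf) (hτ f hf f hf x hx)).1
    have hDqy : D q y = τ y := by rw [hsum y, hζ0 y hy, add_zero]
    have hlie := hLie2 x y
    rw [hyx, sub_zero] at hlie
    rw [hτxy, hlie, hsplit fun k => D k x * D (q - k) y - D (q - k) y * D k x]
    have e0 : D 0 x * D (q - 0) y - D (q - 0) y * D 0 x = x * τ y := by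
      simp only [hD0, Nat.sub_zero, LinearMap.id_coe, id_eq, hDqy, hτyx0, sub_zero]
    have eq' : D q x * D (q - q) y - D (q - q) y * D q x = τ x * y := by
      obtain ⟨c, hc⟩ := hζZ x
      have hDqx : D q x = τ x + c • 1 := by rw [hsum x, hc]
      simp only [Nat.sub_self, hD0, LinearMap.id_coe, id_eq, hDqx, add_mul, mul_add,
        smul_mul_assoc, mul_smul_comm, one_mul, mul_one, hyτx0]
      abel
    have emid : ∑ k ∈ Finset.Icc 1 (q - 1), (D k x * D (q - k) y - D (q - k) y * D k x)
        = ∑ k ∈ Finset.Icc 1 (q - 1), D k x * D (q - k) y := by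
      refine Finset.sum_congr rfl fun k hk => ?_
      have hk' := Finset.mem_Icc.mp hk
      have hdx := hDinv k hk'.1 hk'.2 f hf f hf x hx
      have hdy := hDinv (q - k) (by omega) (by omega) f hf f' hf' y hy
      rw [hmul0 _ _ f' f hf'f
        (hlat f f' _ (hidem f hf) (hidem f' hf') hdy).2
        (hlat f f _ (hidem f hf) (hidem f hf) hdx).1, sub_zero]
    rw [e0, eq', emid]
    abel
  have hSe : e ∈ ({e, 1 - e} : Set (Matrix (Fin n) (Fin n) F)) := Set.mem_insert _ _
  have hSf : (1 - e) ∈ ({e, 1 - e} : Set (Matrix (Fin n) (Fin n) F)) := Set.mem_insert_of_mem _ rfl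
  intro x hx y hy
  rcases hx with hx | hx <;> rcases hy with hy | hy
  · exact key e hSe (1 - e) hSf hef hfe hζ12 x hx y hy
  · exact zkey e hSe (1 - e) hSf e hSe hef x hx y hy
  · exact zkey (1 - e) hSf e hSe (1 - e) hSf hfe x hx y hy
  · exact key (1 - e) hSf e hSe hfe hef hζ21 x hx y hy
end

section
/- (Lemma 3.9) Under the standing hypotheses on F, R, e, q, the maps δ⁽ᵏ⁾ and σ, assume additionally σ(e) ∈ Z(R) = F·1, and let τ, ζ : R → R be the unique F-linear maps with σ = τ + ζ, τ(R_ij) ⊆ R_ij for all i,j ∈ {1,2}, ζ(R) ⊆ Z(R), and ζ(R₁₂) = ζ(R₂₁) = 0. Then for all x ∈ R_ii and y ∈ R_jj (i,j ∈ {1,2}): τ(xy) = τ(x)y + xτ(y) + Σ_{k=1}^{q−1} δ⁽ᵏ⁾(x)·δ⁽q−k⁾(y). -/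
/-!
For `s` in the off-diagonal corner `fRg` (with `{f, g} = {e, 1 - e}`), the product `x y s` of
`x, y ∈ fRf` equals both `[x y, s]` and `[x, [y, s]]`. Expanding `σ` of both by the Lie and
Lie-triple rules, every commutator of Peirce-homogeneous pieces collapses to a plain product, and
`σ` may be replaced by `τ` since `ζ` is central and vanishes on `fRg`; so with
`E = update D q τ` (the family `δ⁽⁰⁾, …, δ⁽q⁻¹⁾, τ`) both sides become truncated Cauchy products.
Their difference is `(∑ E k x E (q - k) y - τ (x y)) s`, so this defect is annihilated by
`f R g`, hence vanishes because `M_n(F)` is a simple, so prime, ring. For `x`, `y` in different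
diagonal corners all terms are zero.
-/

open Finset Function

theorem IsSimpleRing.eq_zero_of_forall_mul_mul_eq_zero {A : Type*} [Ring A] [IsSimpleRing A]
    {M g : A} (hg : g ≠ 0) (h : ∀ r, M * r * g = 0) : M = 0 := by
  let I : TwoSidedIdeal A := .mk' {a | ∀ r, M * r * a = 0} (by simp)
    (fun ha hb r => by rw [mul_add, ha, hb, add_zero])
    (fun ha r => by rw [mul_neg, ha, neg_zero])
    (fun {x _} ha r => by simpa only [mul_assoc] using ha (r * x))
    (fun {_ y} ha r => by rw [← mul_assoc, ha, zero_mul])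
  have h1 : (1 : A) ∈ I :=
    IsSimpleRing.one_mem_of_ne_zero_mem I hg ((TwoSidedIdeal.mem_mk' _ _ _ _ _ _ _).mpr h)
  simpa using (TwoSidedIdeal.mem_mk' _ _ _ _ _ _ _).mp h1 1

section Corner

variable {A : Type*} [Ring A] {a b c : A}

theorem mul_eq_self_of_corner_left (ha : IsIdempotentElem a) {x : A} (hx : x = a * x * b) :
    a * x = x := by
  rw [hx, ← mul_assoc, ← mul_assoc, ha.eq]

theorem mul_eq_self_of_corner_right (hb : IsIdempotentElem b) {x : A} (hx : x = a * x * b) :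
    x * b = x := by
  rw [hx, mul_assoc, hb.eq]

theorem mul_corner (ha : IsIdempotentElem a) (hc : IsIdempotentElem c) {x y : A}
    (hx : x = a * x * b) (hy : y = b * y * c) : x * y = a * (x * y) * c := by
  rw [← mul_assoc a x y, mul_eq_self_of_corner_left ha hx, mul_assoc,
    mul_eq_self_of_corner_right hc hy]

theorem mul_eq_zero_of_corner {d : A} (hbc : b * c = 0) {x y : A}
    (hx : x = a * x * b) (hy : y = c * y * d) : x * y = 0 := by
  rw [hx, hy]
  simp only [mul_assoc]
  rw [← mul_assoc b c, hbc, zero_mul, mul_zero, mul_zero]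

end Corner

structure IsHigherDerivationUpTo {A : Type*} [Ring A] (D : ℕ → A → A) (N : ℕ) : Prop where
  apply_zero : ∀ x, D 0 x = x
  map_mul : ∀ m ≤ N, ∀ x y, D m (x * y) = ∑ k ∈ range (m + 1), D k x * D (m - k) y

namespace IsHigherDerivationUpTo

variable {A : Type*} [Ring A] {D : ℕ → A → A} {N : ℕ}

theorem of_one_le (h0 : ∀ x, D 0 x = x)
    (hmul : ∀ m, 1 ≤ m → m ≤ N → ∀ x y,
      D m (x * y) = ∑ k ∈ range (m + 1), D k x * D (m - k) y) :
    IsHigherDerivationUpTo D N where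
  apply_zero := h0
  map_mul m hm x y := by
    rcases Nat.eq_zero_or_pos m with rfl | hpos
    · simp [h0]
    · exact hmul m hpos hm x y

theorem map_one (hD : IsHigherDerivationUpTo D N) {m : ℕ} (h1 : 1 ≤ m) (hm : m ≤ N) :
    D m 1 = 0 := by
  induction m using Nat.strong_induction_on with
  | _ m ih =>
    obtain ⟨m, rfl⟩ : ∃ m', m = m' + 1 := ⟨m - 1, by omega⟩
    have h := hD.map_mul (m + 1) hm 1 1
    rw [mul_one, sum_range_succ, sum_range_succ', sum_eq_zero fun i hi => ?_] at h
    · simpa [hD.apply_zero] using h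
    · simp only [mem_range] at hi
      rw [ih (i + 1) (by omega) (by omega) (by omega), zero_mul]

theorem apply_corner (hD : IsHigherDerivationUpTo D N) {a b : A}
    (ha : ∀ k, 1 ≤ k → k ≤ N → D k a = 0) (hb : ∀ k, 1 ≤ k → k ≤ N → D k b = 0)
    {x : A} (hx : x = a * x * b) {m : ℕ} (hm : m ≤ N) : D m x = a * D m x * b := by
  have hleft : ∀ y, D m (a * y) = a * D m y := fun y => by
    rw [hD.map_mul m hm, sum_range_succ', sum_eq_zero fun i hi => ?_, zero_add, hD.apply_zero,
      Nat.sub_zero]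
    rw [ha (i + 1) (by omega) (by simp only [mem_range] at hi; omega), zero_mul]
  have hright : ∀ y, D m (y * b) = D m y * b := fun y => by
    rw [hD.map_mul m hm, sum_range_succ, sum_eq_zero fun i hi => ?_, zero_add, Nat.sub_self,
      hD.apply_zero]
    rw [hb (m - i) (by simp only [mem_range] at hi; omega) (by omega), mul_zero]
  conv_lhs => rw [hx]
  rw [hright, hleft]

theorem update_of_lt {q : ℕ} (hD : IsHigherDerivationUpTo D N) (hN : N < q) (τ : A → A) :
    IsHigherDerivationUpTo (update D q τ) N where
  apply_zero x := by rw [update_of_ne (by omega), hD.apply_zero]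
  map_mul m hm x y := by
    rw [update_of_ne (by omega), hD.map_mul m hm]
    refine sum_congr rfl fun k hk => ?_
    simp only [mem_range] at hk
    rw [update_of_ne (by omega), update_of_ne (by omega)]

end IsHigherDerivationUpTo

section TruncatedCauchyProduct

variable {A : Type*} [Ring A]

/-- Associativity of the truncated Cauchy product, up to the failure of the Leibniz rule at
order `q`. -/
theorem IsHigherDerivationUpTo.sum_triple_eq {E : ℕ → A → A} {q : ℕ}
    (hE : IsHigherDerivationUpTo E (q - 1)) (x y s : A) :
    ∑ k ∈ range (q + 1), ∑ l ∈ range (q + 1 - k), E k x * (E l y * E (q - k - l) s) =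
      ∑ k ∈ range (q + 1), E k (x * y) * E (q - k) s +
        (∑ k ∈ range (q + 1), E k x * E (q - k) y - E q (x * y)) * s := by
  have split_last : ∀ k ∈ range (q + 1),
      ∑ l ∈ range (q + 1 - k), E k x * (E l y * E (q - k - l) s) =
        ∑ l ∈ range (q - k), E k x * (E l y * E (q - k - l) s) + E k x * E (q - k) y * s := by
    intro k hk
    simp only [mem_range] at hk
    rw [show q + 1 - k = q - k + 1 by omega, sum_range_succ, Nat.sub_self, hE.apply_zero,
      mul_assoc]
  have leibniz : ∀ i ∈ range q,
      ∑ j ∈ range (i + 1), E j x * (E (i - j) y * E (q - j - (i - j)) s) =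
        E i (x * y) * E (q - i) s := by
    intro i hi
    simp only [mem_range] at hi
    rw [hE.map_mul i (by omega), sum_mul]
    refine sum_congr rfl fun j hj => ?_
    simp only [mem_range] at hj
    rw [show q - j - (i - j) = q - i by omega, mul_assoc]
  rw [sum_congr rfl split_last, sum_add_distrib,
    sum_range_succ (fun k => ∑ l ∈ range (q - k), _), Nat.sub_self, range_zero, sum_empty,
    add_zero, ← sum_range_diag_flip, sum_congr rfl leibniz,
    sum_range_succ (fun k => E k (x * y) * E (q - k) s), Nat.sub_self, hE.apply_zero, sub_mul,
    sum_mul]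
  abel

theorem sum_range_update_mul_eq {D : ℕ → A → A} {q : ℕ} (hq : 0 < q) (h0 : ∀ x, D 0 x = x)
    (τ : A → A) (x y : A) :
    ∑ k ∈ range (q + 1), update D q τ k x * update D q τ (q - k) y =
      τ x * y + x * τ y + ∑ k ∈ Icc 1 (q - 1), D k x * D (q - k) y := by
  obtain ⟨r, rfl⟩ : ∃ r, q = r + 1 := ⟨q - 1, by omega⟩
  have hIcc : ∑ k ∈ Icc 1 r, D k x * D (r + 1 - k) y =
      ∑ i ∈ range r, update D (r + 1) τ (i + 1) x * update D (r + 1) τ (r + 1 - (i + 1)) y := by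
    rw [← Finset.Ico_add_one_right_eq_Icc, sum_Ico_eq_sum_range, Nat.add_sub_cancel]
    refine sum_congr rfl fun i hi => ?_
    simp only [mem_range] at hi
    rw [update_of_ne (by omega), update_of_ne (by omega), add_comm 1 i]
  rw [Nat.add_sub_cancel, hIcc, sum_range_succ, sum_range_succ', Nat.sub_self, Nat.sub_zero,
    update_self, update_of_ne (by omega), h0, h0]
  abel

end TruncatedCauchyProduct

section PeirceCorner

variable {A : Type*} [Ring A] {D : ℕ → A → A} {τ ζ : A → A} {q : ℕ} {f g : A}

theorem IsHigherDerivationUpTo.update_apply_corner (hD : IsHigherDerivationUpTo D (q - 1))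
    {a b : A} (ha : ∀ k, 1 ≤ k → k ≤ q - 1 → D k a = 0)
    (hb : ∀ k, 1 ≤ k → k ≤ q - 1 → D k b = 0) (hτ : ∀ x, x = a * x * b → τ x = a * τ x * b)
    {x : A} (hx : x = a * x * b) {k : ℕ} (hk : k ≤ q) :
    update D q τ k x = a * update D q τ k x * b := by
  rcases hk.lt_or_eq with hk | rfl
  · rw [update_of_ne hk.ne]
    exact hD.apply_corner ha hb hx (by omega)
  · rw [update_self]
    exact hτ x hx

theorem commutator_apply_eq_update_mul (hσ : ∀ x, D q x = τ x + ζ x)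
    (hζ : ∀ x, ζ x ∈ Set.center A) (hgf : g * f = 0) {k : ℕ} {u w : A}
    (hu : update D q τ k u = f * update D q τ k u * f) (hw : w = f * w * g) :
    D k u * w - w * D k u = update D q τ k u * w := by
  obtain ⟨c, hc, hDu⟩ : ∃ c ∈ Set.center A, D k u = update D q τ k u + c := by
    by_cases hk : k = q
    · subst hk
      exact ⟨ζ u, hζ u, by rw [update_self, hσ]⟩
    · exact ⟨0, Set.zero_mem_center, by rw [update_of_ne hk, add_zero]⟩
  rw [hDu, add_mul, mul_add, mul_eq_zero_of_corner hgf hw hu,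
    Semigroup.mem_center_iff.mp hc w]
  abel

theorem sum_range_update_mul_eq_zero (hD : IsHigherDerivationUpTo D (q - 1))
    (hDf : ∀ k, 1 ≤ k → k ≤ q - 1 → D k f = 0) (hDg : ∀ k, 1 ≤ k → k ≤ q - 1 → D k g = 0)
    (hτff : ∀ x, x = f * x * f → τ x = f * τ x * f)
    (hτgg : ∀ x, x = g * x * g → τ x = g * τ x * g) (hfg : f * g = 0) {x y : A}
    (hx : x = f * x * f) (hy : y = g * y * g) :
    ∑ k ∈ range (q + 1), update D q τ k x * update D q τ (q - k) y = 0 :=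
  sum_eq_zero fun k hk => by
    simp only [mem_range] at hk
    exact mul_eq_zero_of_corner hfg (hD.update_apply_corner hDf hDf hτff hx (by omega))
      (hD.update_apply_corner hDg hDg hτgg hy (by omega))

variable (hD : IsHigherDerivationUpTo D (q - 1)) (hq : 0 < q)
  (hLie2 : ∀ x y, D q (x * y - y * x) =
    ∑ k ∈ range (q + 1), (D k x * D (q - k) y - D (q - k) y * D k x))
  (hLie3 : ∀ x y w, D q (x * (y * w - w * y) - (y * w - w * y) * x) =
    ∑ k ∈ range (q + 1), ∑ l ∈ range (q + 1 - k),
      (D k x * (D l y * D (q - k - l) w - D (q - k - l) w * D l y) -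
        (D l y * D (q - k - l) w - D (q - k - l) w * D l y) * D k x))
  (hσ : ∀ x, D q x = τ x + ζ x) (hζ : ∀ x, ζ x ∈ Set.center A)
  (hζfg : ∀ s, s = f * s * g → ζ s = 0)
  (hf : IsIdempotentElem f) (hg : IsIdempotentElem g) (hgf : g * f = 0)
  (hDf : ∀ k, 1 ≤ k → k ≤ q - 1 → D k f = 0) (hDg : ∀ k, 1 ≤ k → k ≤ q - 1 → D k g = 0)
  (hτff : ∀ x, x = f * x * f → τ x = f * τ x * f)
  (hτfg : ∀ s, s = f * s * g → τ s = f * τ s * g)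
include hD hq hLie2 hLie3 hσ hζ hζfg hf hg hgf hDf hDg hτff hτfg

theorem sum_update_mul_sub_tau_mul_mul_eq_zero {x y s : A} (hx : x = f * x * f)
    (hy : y = f * y * f) (hs : s = f * s * g) :
    (∑ k ∈ range (q + 1), update D q τ k x * update D q τ (q - k) y - τ (x * y)) * s = 0 := by
  have hxy := mul_corner hf hf hx hy
  have hys := mul_corner hf hg hy hs
  have hE : ∀ {z}, z = f * z * f → ∀ k ≤ q, update D q τ k z = f * update D q τ k z * f :=
    fun hz k hk => hD.update_apply_corner hDf hDf hτff hz hk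
  have hEs : ∀ k ≤ q, update D q τ k s = f * update D q τ k s * g :=
    fun k hk => hD.update_apply_corner hDf hDg hτfg hs hk
  have hDs : ∀ k, D k s = update D q τ k s := fun k => by
    by_cases hk : k = q
    · subst hk
      rw [update_self, hσ, hζfg s hs, add_zero]
    · rw [update_of_ne hk]
  have hbr : ∀ {u w}, u = f * u * f → w = f * w * g → ∀ k ≤ q,
      D k u * w - w * D k u = update D q τ k u * w :=
    fun hu hw k hk => commutator_apply_eq_update_mul hσ hζ hgf (hE hu k hk) hw
  have via_lie2 : D q (x * y * s) =
      ∑ k ∈ range (q + 1), update D q τ k (x * y) * update D q τ (q - k) s := by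
    rw [← sub_zero (x * y * s), ← mul_eq_zero_of_corner hgf hs hxy, hLie2]
    refine sum_congr rfl fun k hk => ?_
    simp only [mem_range] at hk
    rw [hDs, hbr hxy (hEs _ (by omega)) k (by omega)]
  have via_lie3 : D q (x * y * s) = ∑ k ∈ range (q + 1), ∑ l ∈ range (q + 1 - k),
      update D q τ k x * (update D q τ l y * update D q τ (q - k - l) s) := by
    have hys' : y * s - s * y = y * s := by rw [mul_eq_zero_of_corner hgf hs hy, sub_zero]
    rw [mul_assoc, ← sub_zero (x * (y * s)), ← mul_eq_zero_of_corner hgf hys hx, ← hys', hLie3]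
    refine sum_congr rfl fun k hk => sum_congr rfl fun l hl => ?_
    simp only [mem_range] at hk hl
    have hEs' := hEs (q - k - l) (by omega)
    rw [hDs, hbr hy hEs' l (by omega),
      hbr hx (mul_corner hf hg (hE hy l (by omega)) hEs') k (by omega)]
  have := (hD.update_of_lt (Nat.sub_lt hq one_pos) τ).sum_triple_eq x y s
  rw [← via_lie2, ← via_lie3, update_self] at this
  exact (add_eq_left.mp this.symm)

theorem tau_mul_eq_sum_update_of_corner (hprime : ∀ M : A, (∀ r, M * r * g = 0) → M = 0)
    {x y : A} (hx : x = f * x * f) (hy : y = f * y * f) :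
    τ (x * y) = ∑ k ∈ range (q + 1), update D q τ k x * update D q τ (q - k) y := by
  set M := ∑ k ∈ range (q + 1), update D q τ k x * update D q τ (q - k) y - τ (x * y)
  have hMf : M * f = M := by
    rw [sub_mul, sum_mul, mul_eq_self_of_corner_right hf (hτff _ (mul_corner hf hf hx hy))]
    congr 1
    refine sum_congr rfl fun k hk => ?_
    simp only [mem_range] at hk
    rw [mul_assoc, mul_eq_self_of_corner_right hf
      (hD.update_apply_corner hDf hDf hτff hy (k := q - k) (by omega))]
  have hM : M = 0 := hprime M fun r => by
    have hfrg : f * r * g = f * (f * r * g) * g := by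
      simp only [← mul_assoc, hf.eq]
      rw [mul_assoc _ g g, hg.eq]
    have hMr : M * r * g = M * (f * r * g) := by
      conv_lhs => rw [← hMf]
      simp only [mul_assoc]
    rw [hMr]
    exact sum_update_mul_sub_tau_mul_mul_eq_zero hD hq hLie2 hLie3 hσ hζ hζfg hf hg hgf hDf hDg
      hτff hτfg hx hy hfrg
  exact (sub_eq_zero.mp hM).symm

end PeirceCorner

theorem stmt_7_general {F : Type*} [Field F] {n : ℕ}
    (e : Matrix (Fin n) (Fin n) F) (he : e * e = e) (he0 : e ≠ 0) (he1 : e ≠ 1)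
    (q : ℕ) (hq : 2 ≤ q)
    (D : ℕ → Matrix (Fin n) (Fin n) F →ₗ[F] Matrix (Fin n) (Fin n) F)
    (hD0 : D 0 = LinearMap.id)
    (hDe : ∀ k, 1 ≤ k → k ≤ q - 1 → D k e = 0)
    (hLeib : ∀ m, 1 ≤ m → m ≤ q - 1 → ∀ x y,
      D m (x * y) = ∑ k ∈ Finset.range (m + 1), D k x * D (m - k) y)
    (hLie2 : ∀ x y, D q (x * y - y * x) =
      ∑ k ∈ Finset.range (q + 1), (D k x * D (q - k) y - D (q - k) y * D k x))
    (hLie3 : ∀ x y w, D q (x * (y * w - w * y) - (y * w - w * y) * x) =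
      ∑ k ∈ Finset.range (q + 1), ∑ l ∈ Finset.range (q + 1 - k),
        (D k x * (D l y * D (q - k - l) w - D (q - k - l) w * D l y) -
          (D l y * D (q - k - l) w - D (q - k - l) w * D l y) * D k x))
    (τ ζ : Matrix (Fin n) (Fin n) F →ₗ[F] Matrix (Fin n) (Fin n) F)
    (hsum : ∀ x, D q x = τ x + ζ x)
    (hτ : ∀ f ∈ ({e, 1 - e} : Set (Matrix (Fin n) (Fin n) F)),
      ∀ f' ∈ ({e, 1 - e} : Set (Matrix (Fin n) (Fin n) F)),
      ∀ x, x = f * x * f' → τ x = f * τ x * f')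
    (hζZ : ∀ x, ∃ c : F, ζ x = c • (1 : Matrix (Fin n) (Fin n) F))
    (hζ12 : ∀ x, x = e * x * (1 - e) → ζ x = 0)
    (hζ21 : ∀ x, x = (1 - e) * x * e → ζ x = 0)
    :
    ∀ x, (x = e * x * e ∨ x = (1 - e) * x * (1 - e)) →
    ∀ y, (y = e * y * e ∨ y = (1 - e) * y * (1 - e)) →
      τ (x * y) = τ x * y + x * τ y +
        ∑ k ∈ Finset.Icc 1 (q - 1), D k x * D (q - k) y := by
  intro x hx y hy
  have hD : IsHigherDerivationUpTo (fun k => ⇑(D k)) (q - 1) :=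
    .of_one_le (fun x => by rw [hD0, LinearMap.id_apply]) hLeib
  have he : IsIdempotentElem e := he
  have he' : IsIdempotentElem (1 - e) := he.one_sub
  have hfg : e * (1 - e) = 0 := he.mul_one_sub_self
  have hgf : (1 - e) * e = 0 := he.one_sub_mul_self
  have hDe' : ∀ k, 1 ≤ k → k ≤ q - 1 → D k (1 - e) = 0 := fun k h1 h2 => by
    rw [map_sub, hD.map_one h1 h2, hDe k h1 h2, sub_zero]
  have hζ : ∀ x, ζ x ∈ Set.center (Matrix (Fin n) (Fin n) F) := fun x => by
    obtain ⟨c, hc⟩ := hζZ x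
    exact hc ▸ Set.smul_mem_center c Set.one_mem_center
  have hprime : ∀ {g : Matrix (Fin n) (Fin n) F}, g ≠ 0 →
      ∀ M, (∀ r, M * r * g = 0) → M = 0 := by
    have : Nonempty (Fin n) :=
      ⟨⟨0, Nat.pos_of_ne_zero (by rintro rfl; exact he0 (Subsingleton.elim _ _))⟩⟩
    intro g hg M
    exact IsSimpleRing.eq_zero_of_forall_mul_mul_eq_zero hg
  have hτ₁₁ := hτ e (by simp) e (by simp)
  have hτ₁₂ := hτ e (by simp) (1 - e) (by simp)
  have hτ₂₁ := hτ (1 - e) (by simp) e (by simp)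
  have hτ₂₂ := hτ (1 - e) (by simp) (1 - e) (by simp)
  refine .trans ?_ (sum_range_update_mul_eq (by omega) hD.apply_zero τ x y)
  rcases hx with hx | hx <;> rcases hy with hy | hy
  · exact tau_mul_eq_sum_update_of_corner hD (by omega) hLie2 hLie3 hsum hζ hζ12 he he' hgf
      hDe hDe' hτ₁₁ hτ₁₂ (hprime (sub_ne_zero.mpr he1.symm)) hx hy
  · rw [mul_eq_zero_of_corner hfg hx hy, map_zero,
      sum_range_update_mul_eq_zero hD hDe hDe' hτ₁₁ hτ₂₂ hfg hx hy]
  · rw [mul_eq_zero_of_corner hgf hx hy, map_zero,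
      sum_range_update_mul_eq_zero hD hDe' hDe hτ₂₂ hτ₁₁ hgf hx hy]
  · exact tau_mul_eq_sum_update_of_corner hD (by omega) hLie2 hLie3 hsum hζ hζ21 he' he hfg
      hDe' hDe hτ₂₂ hτ₂₁ (hprime he0) hx hy

/-- Lemma 3.9: with `σ = τ + ζ` as in the text, for all `x ∈ R_ii` and `y ∈ R_jj`,
`τ(xy) = τ(x)y + xτ(y) + Σ_{k=1}^{q-1} δ⁽ᵏ⁾(x) δ⁽q-k⁾(y)`. -/
theorem stmt_7 {F : Type*} [Field F] {p : ℕ} [CharP F p] (hp2 : p ≠ 2)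
    {n : ℕ} (hn : 2 ≤ n)
    (e : Matrix (Fin n) (Fin n) F) (he : e * e = e) (he0 : e ≠ 0) (he1 : e ≠ 1)
    (q : ℕ) (hq : 2 ≤ q)
    (D : ℕ → Matrix (Fin n) (Fin n) F →ₗ[F] Matrix (Fin n) (Fin n) F)
    (hD0 : D 0 = LinearMap.id)
    (hDe : ∀ k, 1 ≤ k → k ≤ q - 1 → D k e = 0)
    (hLeib : ∀ m, 1 ≤ m → m ≤ q - 1 → ∀ x y,
      D m (x * y) = ∑ k ∈ Finset.range (m + 1), D k x * D (m - k) y)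
    (hLie2 : ∀ x y, D q (x * y - y * x) =
      ∑ k ∈ Finset.range (q + 1), (D k x * D (q - k) y - D (q - k) y * D k x))
    (hLie3 : ∀ x y w, D q (x * (y * w - w * y) - (y * w - w * y) * x) =
      ∑ k ∈ Finset.range (q + 1), ∑ l ∈ Finset.range (q + 1 - k),
        (D k x * (D l y * D (q - k - l) w - D (q - k - l) w * D l y) -
          (D l y * D (q - k - l) w - D (q - k - l) w * D l y) * D k x))
    (hσe : ∃ c : F, D q e = c • (1 : Matrix (Fin n) (Fin n) F))
    (τ ζ : Matrix (Fin n) (Fin n) F →ₗ[F] Matrix (Fin n) (Fin n) F)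
    (hsum : ∀ x, D q x = τ x + ζ x)
    (hτ : ∀ f ∈ ({e, 1 - e} : Set (Matrix (Fin n) (Fin n) F)),
      ∀ f' ∈ ({e, 1 - e} : Set (Matrix (Fin n) (Fin n) F)),
      ∀ x, x = f * x * f' → τ x = f * τ x * f')
    (hζZ : ∀ x, ∃ c : F, ζ x = c • (1 : Matrix (Fin n) (Fin n) F))
    (hζ12 : ∀ x, x = e * x * (1 - e) → ζ x = 0)
    (hζ21 : ∀ x, x = (1 - e) * x * e → ζ x = 0)
    :
    ∀ x, (x = e * x * e ∨ x = (1 - e) * x * (1 - e)) →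
    ∀ y, (y = e * y * e ∨ y = (1 - e) * y * (1 - e)) →
      τ (x * y) = τ x * y + x * τ y +
        ∑ k ∈ Finset.Icc 1 (q - 1), D k x * D (q - k) y :=
  stmt_7_general e he he0 he1 q hq D hD0 hDe hLeib hLie2 hLie3 τ ζ hsum hτ hζZ hζ12 hζ21
end

section
/- (Lemma 4.2, first part) Let R be a vector space over a field F, G a group, and let R = ⊕_{g∈G} R_g and R = ⊕_{g∈G} R̃_g be two G-gradings of R (as vector space decompositions) that are compatible, i.e. R̃_g = ⊕_{x∈G} (R_x ∩ R̃_g) for every g ∈ G. Let H be a normal subgroup of G such that the two factor-gradings by G/H coincide, i.e. for every coset C of H in G, ⊕_{g∈C} R_g = ⊕_{g∈C} R̃_g. For h ∈ H set R^h = ⊕_{g∈G} (R̃_g ∩ R_{gh}). Then for every g ∈ G: R_g = ⊕_{h∈H} (R̃_{gh⁻¹} ∩ R^h). -/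
/-- In a modular complete lattice: if `f i ≤ A` and `A` is disjoint from the
sup of the other terms, then `A ⊓ ⨆ j, f j = f i`. -/
lemma aux_modular {α : Type*} [CompleteLattice α] [IsModularLattice α] {ι : Type*}
    (f : ι → α) (A : α) (i : ι) (h1 : f i ≤ A)
    (h2 : Disjoint A (⨆ (j) (_ : j ≠ i), f j)) :
    A ⊓ ⨆ j, f j = f i := by
  have hsplit : (⨆ j, f j) = f i ⊔ ⨆ (j) (_ : j ≠ i), f j := by
    apply le_antisymm
    · exact iSup_le fun j => by
        by_cases hj : j = i
        · subst hj; exact le_sup_left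
        · exact le_sup_of_le_right (le_iSup₂ (f := fun j _ => f j) j hj)
    · exact sup_le (le_iSup f i) (iSup₂_le fun j _ => le_iSup f j)
  rw [hsplit, inf_comm, sup_inf_assoc_of_le _ h1, inf_comm, h2.eq_bot, sup_bot_eq]

/-- Lemma 4.2 (first part): given two compatible `G`-gradings of a vector space `R`
whose factor-gradings modulo a normal subgroup `H` coincide, and setting
`R^h = ⊕_{g∈G} (R̃_g ⊓ R_{gh})`, one has `R_g = ⊕_{h∈H} (R̃_{gh⁻¹} ⊓ R^h)`. -/
theorem stmt_9 {F V : Type*} [Field F] [AddCommGroup V] [Module F V]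
    {G : Type*} [Group G]
    (R Rt : G → Submodule F V)
    (hRindep : iSupIndep R) (hRsup : ⨆ g, R g = ⊤)
    (hRtindep : iSupIndep Rt) (hRtsup : ⨆ g, Rt g = ⊤)
    (hcompat : ∀ g : G, Rt g = ⨆ x : G, (R x ⊓ Rt g))
    (H : Subgroup G) [H.Normal]
    (hfactor : ∀ g : G, (⨆ h : H, R (g * (h : G))) = ⨆ h : H, Rt (g * (h : G))) :
    ∀ g : G,
      iSupIndep (fun h : H => Rt (g * (h : G)⁻¹) ⊓ ⨆ x : G, (Rt x ⊓ R (x * (h : G)))) ∧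
      R g = ⨆ h : H, (Rt (g * (h : G)⁻¹) ⊓ ⨆ x : G, (Rt x ⊓ R (x * (h : G)))) := by
  -- orthogonality: R x ⊓ Rt y = ⊥ unless x ∈ yH
  have horth : ∀ x y : G, y⁻¹ * x ∉ H → R x ⊓ Rt y = ⊥ := by
    intro x y hxy
    have h1 : Rt y ≤ ⨆ h : H, Rt (y * (h : G)) := by
      have := le_iSup (fun h : H => Rt (y * (h : G))) 1
      simpa using this
    have h2 : (⨆ h : H, Rt (y * (h : G))) ≤ ⨆ (j) (_ : j ≠ x), R j := by
      rw [← hfactor]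
      refine iSup_le fun h => ?_
      refine le_iSup₂ (f := fun j (_ : j ≠ x) => R j) (y * (h : G)) ?_
      intro hyx
      exact hxy (by rw [← hyx]; simpa using h.2)
    exact (hRindep x).mono_right (h1.trans h2) |>.eq_bot
  -- symmetric compatibility: R x = ⨆ y, (Rt y ⊓ R x)
  have hcompat' : ∀ x : G, R x = ⨆ y : G, (Rt y ⊓ R x) := by
    intro x
    have htop : (⨆ z : G, ⨆ y : G, (R z ⊓ Rt y)) = ⊤ := by
      rw [← hRtsup]
      apply le_antisymm
      · exact iSup_le fun z => iSup_le fun y => inf_le_right.trans (le_iSup Rt y)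
      · exact iSup_le fun y => (hcompat y).le.trans
          (iSup_le fun z => le_iSup_of_le z (le_iSup (fun y' => R z ⊓ Rt y') y))
    have := aux_modular (fun z => ⨆ y : G, (R z ⊓ Rt y)) (R x) x
      (iSup_le fun y => inf_le_left)
      ((hRindep x).mono_right (iSup₂_le fun z hz =>
        (iSup_le fun y => inf_le_left).trans (le_iSup₂ (f := fun j (_ : j ≠ x) => R j) z hz)))
    rw [htop, inf_top_eq] at this
    calc R x = ⨆ y : G, (R x ⊓ Rt y) := this
      _ = ⨆ y : G, (Rt y ⊓ R x) := iSup_congr fun y => inf_comm _ _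
  intro g
  -- key: Rt (g h⁻¹) ⊓ R^h = Rt (g h⁻¹) ⊓ R g
  have hkey : ∀ h : H, (Rt (g * (h : G)⁻¹) ⊓ ⨆ x : G, (Rt x ⊓ R (x * (h : G))))
      = Rt (g * (h : G)⁻¹) ⊓ R g := by
    intro h
    have := aux_modular (fun x => Rt x ⊓ R (x * (h : G))) (Rt (g * (h : G)⁻¹)) (g * (h : G)⁻¹)
      inf_le_left
      ((hRtindep (g * (h : G)⁻¹)).mono_right (iSup₂_le fun z hz =>
        inf_le_left.trans (le_iSup₂ (f := fun j (_ : j ≠ g * (h : G)⁻¹) => Rt j) z hz)))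
    rw [this]
    congr 1
    group
  constructor
  · have : iSupIndep (fun h : H => Rt (g * (h : G)⁻¹)) := by
      apply hRtindep.comp
      intro a b hab
      exact Subtype.ext (inv_injective (mul_left_cancel hab))
    exact this.mono fun h => by rw [hkey h]; exact inf_le_left
  · rw [hcompat' g]
    apply le_antisymm
    · refine iSup_le fun y => ?_
      by_cases hy : y⁻¹ * g ∈ H
      · have hle : Rt y ⊓ R g ≤ Rt (g * ((⟨y⁻¹ * g, hy⟩ : H) : G)⁻¹) ⊓ ⨆ x : G, (Rt x ⊓ R (x * ((⟨y⁻¹ * g, hy⟩ : H) : G))) := by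
          rw [hkey]
          have hyy : g * (((⟨y⁻¹ * g, hy⟩ : H) : G))⁻¹ = y := by
            show g * (y⁻¹ * g)⁻¹ = y
            group
          rw [hyy]
        exact hle.trans (le_iSup (fun h : H => Rt (g * (h : G)⁻¹) ⊓ ⨆ x : G, (Rt x ⊓ R (x * (h : G)))) (⟨y⁻¹ * g, hy⟩ : H))
      · rw [inf_comm, horth g y hy]
        exact bot_le
    · refine iSup_le fun h => ?_
      rw [hkey h]
      exact le_iSup_of_le (g * (h : G)⁻¹) le_rfl
end

section
/- (Lemma 4.2, second part) Let R be a (not necessarily associative) algebra over a field F, G a group, and let R = ⊕_{g∈G} R_g and R = ⊕_{g∈G} R̃_g be two G-gradings of the algebra R (so R_g R_h ⊆ R_{gh} and R̃_g R̃_h ⊆ R̃_{gh}) that are compatible as vector space gradings, i.e. R̃_g = ⊕_{x∈G} (R_x ∩ R̃_g) for every g ∈ G. Let H be a subgroup of G contained in the center Z(G) such that the two factor-gradings by G/H coincide. For h ∈ H set R^h = ⊕_{g∈G} (R̃_g ∩ R_{gh}). Then R = ⊕_{h∈H} R^h is an H-grading of the algebra R; in particular R^{h₁} R^{h₂} ⊆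 R^{h₁h₂} for all h₁, h₂ ∈ H. -/
/-!
The subspaces `R̃_g ⊓ R_x`, `(g, x) ∈ G × G`, form an independent family, and `R^h` is the sum of
those with `x = g h`; these index sets are disjoint for distinct `h`, so the `R^h` are independent.
They span `R`: by compatibility `R̃_g` is the sum of its meets with the `R_x`, and since the
factor-gradings coincide, `R̃_g` lies in `⊕_{h ∈ H} R_{gh}`, so only `x ∈ gH` contributes.
Multiplicativity holds because `g₁ h₁ g₂ h₂ = g₁ g₂ (h₁ h₂)` for central `h₁`.
-/

/-- The component `R^h = ⊕_{g∈G} (R̃_g ⊓ R_{gh})` of the exchanged grading. -/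
def exchangeComponent {F A : Type*} [Field F] [NonUnitalNonAssocRing A] [Module F A]
    {G : Type*} [Group G] (R Rt : G → Submodule F A) (h : G) : Submodule F A :=
  ⨆ g : G, (Rt g ⊓ R (g * h))

universe u

open Function

section Lattice

variable {α : Type*} [CompleteLattice α]

theorem iSupIndep.iSup_inf_eq_biSup_inf {ι : Type*} {f : ι → α} (hf : iSupIndep f)
    {s : Set ι} {a : α} (ha : a ≤ ⨆ i ∈ s, f i) : ⨆ i, f i ⊓ a = ⨆ i ∈ s, f i ⊓ a := by
  refine le_antisymm (iSup_le fun i => ?_) (iSup₂_le fun i _ => le_iSup (fun i => f i ⊓ a) i)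
  by_cases hi : i ∈ s
  · exact le_biSup (fun i => f i ⊓ a) hi
  · have : f i ⊓ a = ⊥ := disjoint_iff.mp ((hf.disjoint_biSup hi).mono_right ha)
    simp [this]

variable [IsModularLattice α] [IsCompactlyGenerated α]

theorem iSupIndep.biSup_of_pairwiseDisjoint {ι κ : Type*} {f : ι → α} (hf : iSupIndep f)
    {s : κ → Set ι} (hs : Pairwise (Disjoint on s)) : iSupIndep fun k => ⨆ i ∈ s k, f i := by
  intro k
  have hcover : (⨆ (j) (_ : j ≠ k), ⨆ i ∈ s j, f i) = ⨆ i ∈ ⋃ (j) (_ : j ≠ k), s j, f i := by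
    simp only [iSup_iUnion]
  rw [hcover]
  refine hf.disjoint_biSup_biSup (Set.disjoint_iUnion_right.mpr fun j => ?_)
  exact Set.disjoint_iUnion_right.mpr fun hj => hs (Ne.symm hj)

theorem iSupIndep.inf_prod {ι κ : Type u} {f : ι → α} {g : κ → α} (hf : iSupIndep f)
    (hg : iSupIndep g) : iSupIndep fun p : ι × κ => f p.1 ⊓ g p.2 := by
  -- `f i ⊓ g j` is the infimum over `b : Bool` of the pair of families `(f, g)`
  let fam : (b : Bool) → cond b ι κ → α := fun b =>
    Bool.rec (motive := fun b => cond b ι κ → α) g f b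
  let pick : ι × κ → (b : Bool) → cond b ι κ := fun p => Bool.rec p.2 p.1
  have hpick : Injective pick := fun p q h => Prod.ext (congrFun h true) (congrFun h false)
  convert (iSupIndep.iInf fam (Bool.rec hg hf)).comp hpick using 2 with p
  simp [iInf_bool_eq, fam, pick]

end Lattice

theorem Submodule.mul_mem_of_mem_iSup {R A : Type*} [Semiring R] [NonUnitalNonAssocSemiring A]
    [Module R A] {ι κ : Sort*} {p : ι → Submodule R A} {q : κ → Submodule R A}
    {r : Submodule R A} (h : ∀ i j, ∀ x ∈ p i, ∀ y ∈ q j, x * y ∈ r) {x y : A}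
    (hx : x ∈ ⨆ i, p i) (hy : y ∈ ⨆ j, q j) : x * y ∈ r := by
  refine Submodule.iSup_induction p (motive := fun x => x * y ∈ r) hx (fun i x hx => ?_)
    (by simp) (fun x₁ x₂ h₁ h₂ => by simpa only [add_mul] using add_mem h₁ h₂)
  exact Submodule.iSup_induction q (motive := fun y => x * y ∈ r) hy (h i · x hx)
    (by simp) (fun y₁ y₂ h₁ h₂ => by simpa only [mul_add] using add_mem h₁ h₂)

section ExchangeComponent

variable {F A : Type*} [Field F] [NonUnitalNonAssocRing A] [Module F A] {G : Type*} [Group G]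
  {R Rt : G → Submodule F A}

theorem iSupIndep_exchangeComponent (hR : iSupIndep R) (hRt : iSupIndep Rt) :
    iSupIndep (exchangeComponent R Rt) := by
  have hpairs : iSupIndep fun z : G × G => Rt z.1 ⊓ R z.2 := hRt.inf_prod hR
  have hdisj : Pairwise (Disjoint on fun h : G => Set.range fun g => (g, g * h)) := by
    intro h₁ h₂ hne
    refine Set.disjoint_left.mpr ?_
    rintro _ ⟨g₁, rfl⟩ ⟨g₂, hg⟩
    obtain ⟨rfl, hmul⟩ := Prod.ext_iff.mp hg
    exact hne (mul_left_cancel hmul).symm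
  have := hpairs.biSup_of_pairwiseDisjoint hdisj
  simp only [iSup_range] at this
  exact this

theorem iSup_exchangeComponent_eq_top (hR : iSupIndep R) (hRt : ⨆ g, Rt g = ⊤)
    (hcompat : ∀ g, Rt g = ⨆ x, R x ⊓ Rt g) (H : Subgroup G)
    (hfactor : ∀ g, ⨆ h : H, R (g * h) = ⨆ h : H, Rt (g * h)) :
    ⨆ h : H, exchangeComponent R Rt h = ⊤ := by
  have hcoset : ∀ g, Rt g ≤ ⨆ x ∈ Set.range fun h : H => g * (h : G), R x := fun g => by
    rw [iSup_range, hfactor]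
    simpa using le_iSup (fun h : H => Rt (g * h)) 1
  calc ⨆ h : H, exchangeComponent R Rt h
      = ⨆ g : G, ⨆ x ∈ Set.range fun h : H => g * (h : G), R x ⊓ Rt g := by
        simp only [exchangeComponent, iSup_range, inf_comm (Rt _)]
        exact iSup_comm
    _ = ⨆ g, Rt g := by
        refine iSup_congr fun g => ?_
        rw [← hR.iSup_inf_eq_biSup_inf (hcoset g), ← hcompat]
    _ = ⊤ := hRt

theorem mul_mem_exchangeComponent
    (hRmul : ∀ g h : G, ∀ x ∈ R g, ∀ y ∈ R h, x * y ∈ R (g * h))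
    (hRtmul : ∀ g h : G, ∀ x ∈ Rt g, ∀ y ∈ Rt h, x * y ∈ Rt (g * h))
    {h₁ : G} (hh₁ : h₁ ∈ Subgroup.center G) (h₂ : G) {x y : A}
    (hx : x ∈ exchangeComponent R Rt h₁) (hy : y ∈ exchangeComponent R Rt h₂) :
    x * y ∈ exchangeComponent R Rt (h₁ * h₂) := by
  refine Submodule.mul_mem_of_mem_iSup (fun g₁ g₂ x hx y hy => ?_) hx hy
  have hdeg : g₁ * h₁ * (g₂ * h₂) = g₁ * g₂ * (h₁ * h₂) := by
    rw [mul_assoc g₁, ← mul_assoc h₁, (Subgroup.mem_center_iff.mp hh₁ g₂).symm]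
    group
  refine Submodule.mem_iSup_of_mem (g₁ * g₂) ⟨hRtmul _ _ x hx.1 y hy.1, ?_⟩
  exact hdeg ▸ hRmul _ _ x hx.2 y hy.2

end ExchangeComponent

theorem stmt_10_general {F A : Type*} [Field F] [NonUnitalNonAssocRing A] [Module F A]
    {G : Type*} [Group G]
    (R Rt : G → Submodule F A)
    (hRindep : iSupIndep R)
    (hRmul : ∀ g h : G, ∀ x ∈ R g, ∀ y ∈ R h, x * y ∈ R (g * h))
    (hRtindep : iSupIndep Rt) (hRtsup : ⨆ g, Rt g = ⊤)
    (hRtmul : ∀ g h : G, ∀ x ∈ Rt g, ∀ y ∈ Rt h, x * y ∈ Rt (g * h))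
    (hcompat : ∀ g : G, Rt g = ⨆ x : G, (R x ⊓ Rt g))
    (H : Subgroup G) (hHcentral : H ≤ Subgroup.center G)
    (hfactor : ∀ g : G, (⨆ h : H, R (g * (h : G))) = ⨆ h : H, Rt (g * (h : G))) :
    iSupIndep (fun h : H => exchangeComponent R Rt (h : G)) ∧
    (⨆ h : H, exchangeComponent R Rt (h : G)) = ⊤ ∧
    (∀ h₁ h₂ : H, ∀ x ∈ exchangeComponent R Rt (h₁ : G), ∀ y ∈ exchangeComponent R Rt (h₂ : G),
      x * y ∈ exchangeComponent R Rt ((h₁ * h₂ : H) : G)) :=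
  ⟨(iSupIndep_exchangeComponent hRindep hRtindep).comp Subtype.val_injective,
    iSup_exchangeComponent_eq_top hRindep hRtsup hcompat H hfactor,
    fun h₁ h₂ _ hx _ hy => mul_mem_exchangeComponent hRmul hRtmul (hHcentral h₁.2) h₂ hx hy⟩

/-- Lemma 4.2 (second part): given two compatible `G`-gradings of a (not necessarily
associative) algebra `R`, with `H ⊆ Z(G)` a subgroup such that the two factor-gradings
modulo `H` coincide, the subspaces `R^h = ⊕_{g∈G} (R̃_g ⊓ R_{gh})`, `h ∈ H`, form an
`H`-grading of the algebra `R`; in particular `R^{h₁} R^{h₂} ⊆ R^{h₁h₂}`. -/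
theorem stmt_10 {F A : Type*} [Field F] [NonUnitalNonAssocRing A] [Module F A]
    [SMulCommClass F A A] [IsScalarTower F A A]
    {G : Type*} [Group G]
    (R Rt : G → Submodule F A)
    (hRindep : iSupIndep R) (hRsup : ⨆ g, R g = ⊤)
    (hRmul : ∀ g h : G, ∀ x ∈ R g, ∀ y ∈ R h, x * y ∈ R (g * h))
    (hRtindep : iSupIndep Rt) (hRtsup : ⨆ g, Rt g = ⊤)
    (hRtmul : ∀ g h : G, ∀ x ∈ Rt g, ∀ y ∈ Rt h, x * y ∈ Rt (g * h))
    (hcompat : ∀ g : G, Rt g = ⨆ x : G, (R x ⊓ Rt g))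
    (H : Subgroup G) (hHcentral : H ≤ Subgroup.center G)
    (hfactor : ∀ g : G, (⨆ h : H, R (g * (h : G))) = ⨆ h : H, Rt (g * (h : G))) :
    iSupIndep (fun h : H => exchangeComponent R Rt (h : G)) ∧
    (⨆ h : H, exchangeComponent R Rt (h : G)) = ⊤ ∧
    (∀ h₁ h₂ : H, ∀ x ∈ exchangeComponent R Rt (h₁ : G), ∀ y ∈ exchangeComponent R Rt (h₂ : G),
      x * y ∈ exchangeComponent R Rt ((h₁ * h₂ : H) : G)) :=
  stmt_10_general R Rt hRindep hRmul hRtindep hRtsup hRtmul hcompat H hHcentral hfactor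
end

section
/- If a simple Lie algebra L over a field F is graded by a group G, L = ⊕_{g∈G} L_g with [L_g, L_h] ⊆ L_{gh}, then the subgroup of G generated by the support Supp(L) = {g ∈ G : L_g ≠ 0} is abelian. -/
section AuxGrading

variable {F L G : Type*} [Field F] [LieRing L] [LieAlgebra F L] [Group G]

/-- The centralizer (as a submodule) of a submodule `N` in a Lie algebra. -/
def auxCentK (N : Submodule F L) : Submodule F L where
  carrier := {x : L | ∀ n ∈ N, ⁅x, n⁆ = 0}
  add_mem' := by
    intro a b ha hb n hn
    rw [add_lie, ha n hn, hb n hn, add_zero]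
  zero_mem' := by intro n hn; exact zero_lie n
  smul_mem' := by
    intro c x hx n hn
    rw [smul_lie, hx n hn, smul_zero]

lemma auxCentK_mem {N : Submodule F L} {x : L} :
    x ∈ auxCentK N ↔ ∀ n ∈ N, ⁅x, n⁆ = 0 := Iff.rfl

set_option linter.unusedSectionVars false in
/-- Double induction over graded pieces. -/
lemma aux_lie_ind (Lg : G → Submodule F L) (P Q : G → Prop) (R : Submodule F L)
    (h : ∀ g h : G, P g → Q h → ∀ x ∈ Lg g, ∀ y ∈ Lg h, ⁅x, y⁆ ∈ R) :
    ∀ x ∈ (⨆ g, ⨆ _ : P g, Lg g), ∀ y ∈ (⨆ g, ⨆ _ : Q g, Lg g), ⁅x, y⁆ ∈ R := by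
  have step : ∀ x : L, (∀ g : G, Q g → ∀ y ∈ Lg g, ⁅x, y⁆ ∈ R) →
      ∀ y ∈ (⨆ g, ⨆ _ : Q g, Lg g), ⁅x, y⁆ ∈ R := by
    intro x hx y hy
    have hle : (⨆ g, ⨆ _ : Q g, Lg g) ≤ R.comap (LieAlgebra.ad F L x) := by
      refine iSup_le fun g => iSup_le fun hQ => fun z hz => ?_
      exact hx g hQ z hz
    exact hle hy
  intro x hx
  refine step x ?_
  have hle : (⨆ g, ⨆ _ : P g, Lg g) ≤
      ⨅ g : G, ⨅ _ : Q g, ⨅ y : (Lg g), R.comap (LieAlgebra.ad F L (y : L)) := by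
    refine iSup_le fun g => iSup_le fun hP => fun z hz => ?_
    simp only [Submodule.mem_iInf]
    intro g' hQ y
    have h1 : ⁅z, (y : L)⁆ ∈ R := h g g' hP hQ z hz y y.2
    have h2 : ⁅(y : L), z⁆ ∈ R := by
      rw [← lie_skew]
      exact neg_mem h1
    exact h2
  have hx' := hle hx
  simp only [Submodule.mem_iInf] at hx'
  intro g' hQ y hy
  have h1 : ⁅y, x⁆ ∈ R := hx' g' hQ ⟨y, hy⟩
  rw [← lie_skew]
  exact neg_mem h1

end AuxGrading

/-- If a simple Lie algebra `L` over a field `F` is graded by a group `G`, then the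
subgroup of `G` generated by the support `{g : L_g ≠ 0}` of the grading is abelian. -/
theorem stmt_16 {F L : Type*} [Field F] [LieRing L] [LieAlgebra F L]
    [LieAlgebra.IsSimple F L]
    {G : Type*} [Group G]
    (Lg : G → Submodule F L)
    (hindep : iSupIndep Lg) (hsup : ⨆ g, Lg g = ⊤)
    (hbr : ∀ g h : G, ∀ x ∈ Lg g, ∀ y ∈ Lg h, ⁅x, y⁆ ∈ Lg (g * h)) :
    ∀ a ∈ Subgroup.closure {g : G | Lg g ≠ ⊥},
    ∀ b ∈ Subgroup.closure {g : G | Lg g ≠ ⊥}, a * b = b * a := by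
  -- Step 0: brackets between pieces of non-commuting degrees vanish.
  have hzero : ∀ g h : G, ¬ g * h = h * g → ∀ x ∈ Lg g, ∀ y ∈ Lg h, ⁅x, y⁆ = 0 := by
    intro g h hgh x hx y hy
    have h1 : ⁅x, y⁆ ∈ Lg (g * h) := hbr g h x hx y hy
    have h2 : ⁅x, y⁆ ∈ Lg (h * g) := by
      rw [← lie_skew]
      exact neg_mem (hbr h g y hy x hx)
    have hdisj : Disjoint (Lg (g * h)) (Lg (h * g)) :=
      hindep.pairwiseDisjoint (show (g * h) ≠ (h * g) from hgh)
    exact Submodule.disjoint_def.mp hdisj _ h1 h2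
  -- Step 1: any two elements of the support commute.
  have key : ∀ s ∈ {g : G | Lg g ≠ ⊥}, ∀ t ∈ {g : G | Lg g ≠ ⊥}, s * t = t * s := by
    intro s hs t ht
    by_contra hst
    set M : Submodule F L := ⨆ g, ⨆ _ : g * s = s * g, Lg g with hM
    set N : Submodule F L := ⨆ g, ⨆ _ : ¬ g * s = s * g, Lg g with hN
    have hLgM : ∀ g, g * s = s * g → Lg g ≤ M := fun g hg =>
      le_iSup_of_le g (le_iSup_of_le hg le_rfl)
    have hLgN : ∀ g, ¬ g * s = s * g → Lg g ≤ N := fun g hg =>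
      le_iSup_of_le g (le_iSup_of_le hg le_rfl)
    have hMN : M ⊔ N = ⊤ := by
      rw [eq_top_iff, ← hsup]
      refine iSup_le fun g => ?_
      by_cases hg : g * s = s * g
      · exact le_sup_of_le_left (hLgM g hg)
      · exact le_sup_of_le_right (hLgN g hg)
    -- bracket relations between M and N
    have hMM : ∀ x ∈ M, ∀ y ∈ M, ⁅x, y⁆ ∈ M := by
      refine aux_lie_ind Lg _ _ M fun g h hg hh x hx y hy => ?_
      refine hLgM (g * h) ?_ (hbr g h x hx y hy)
      rw [mul_assoc, hh, ← mul_assoc, hg, mul_assoc]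
    have hMNN : ∀ x ∈ M, ∀ y ∈ N, ⁅x, y⁆ ∈ N := by
      refine aux_lie_ind Lg _ _ N fun g h hg hh x hx y hy => ?_
      refine hLgN (g * h) ?_ (hbr g h x hx y hy)
      intro hc
      apply hh
      have h1 : g * (h * s) = g * (s * h) := by
        rw [← mul_assoc, hc, ← mul_assoc, ← hg, mul_assoc]
      exact mul_left_cancel h1
    have hNMN : ∀ x ∈ N, ∀ y ∈ M, ⁅x, y⁆ ∈ N := by
      refine aux_lie_ind Lg _ _ N fun g h hg hh x hx y hy => ?_
      refine hLgN (g * h) ?_ (hbr g h x hx y hy)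
      intro hc
      apply hg
      have h1 : g * s * h = s * g * h := by
        rw [mul_assoc, ← hh, ← mul_assoc, hc, mul_assoc]
      exact mul_right_cancel h1
    -- L_s centralizes N, hence lies in K
    have hsK : ∀ x ∈ Lg s, x ∈ auxCentK N := by
      intro x hx
      refine auxCentK_mem.mpr ?_
      intro n hn
      have hind := aux_lie_ind Lg (fun g => g = s) (fun g => ¬ g * s = s * g) ⊥
        (fun g h hg hh y hy z hz => by
          rw [Submodule.mem_bot]
          refine hzero g h ?_ y hy z hz
          rw [hg]
          exact fun e => hh e.symm)
      have hle' : Lg s ≤ (⨆ g, ⨆ _ : g = s, Lg g) :=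
        le_iSup_of_le s (le_iSup_of_le rfl le_rfl)
      have hxmem : x ∈ (⨆ g, ⨆ _ : g = s, Lg g) := hle' hx
      have := hind x hxmem n hn
      rwa [Submodule.mem_bot] at this
    -- the ideal K ⊓ M
    have hIdeal : ∀ (x m : L), m ∈ auxCentK N ⊓ M → ⁅x, m⁆ ∈ auxCentK N ⊓ M := by
      intro x m hm
      rw [Submodule.mem_inf] at hm
      obtain ⟨hmK', hmM⟩ := hm
      have hmK : ∀ n ∈ N, ⁅m, n⁆ = 0 := auxCentK_mem.mp hmK'
      obtain ⟨a, ha, b, hb, hab⟩ := Submodule.mem_sup.mp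
        (show x ∈ M ⊔ N by rw [hMN]; exact Submodule.mem_top)
      have hbm : ⁅b, m⁆ = 0 := by
        rw [← lie_skew, hmK b hb, neg_zero]
      have hx : ⁅x, m⁆ = ⁅a, m⁆ := by
        rw [← hab, add_lie, hbm, add_zero]
      rw [hx, Submodule.mem_inf]
      constructor
      · refine auxCentK_mem.mpr ?_
        intro n hn
        have hjac : ⁅⁅a, m⁆, n⁆ = ⁅a, ⁅m, n⁆⁆ - ⁅m, ⁅a, n⁆⁆ := lie_lie a m n
        rw [hjac, hmK n hn, lie_zero, hmK _ (hMNN a ha n hn), sub_zero]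
      · exact hMM a ha m hmM
    let I : LieIdeal F L :=
      { toSubmodule := auxCentK N ⊓ M
        lie_mem := fun {x m} hm => hIdeal x m hm }
    have hImem : ∀ z : L, z ∈ I ↔ z ∈ auxCentK N ⊓ M := fun z => Iff.rfl
    obtain ⟨x₀, hx₀mem, hx₀ne⟩ := Submodule.exists_mem_ne_zero_of_ne_bot hs
    have hx₀I : x₀ ∈ I := by
      rw [hImem]
      exact ⟨hsK x₀ hx₀mem, hLgM s rfl hx₀mem⟩
    have hItop : I = ⊤ := by
      rcases LieAlgebra.IsSimple.eq_bot_or_eq_top I with h | h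
      · exfalso
        apply hx₀ne
        rw [h] at hx₀I
        simpa using hx₀I
      · exact h
    -- hence M = ⊤, contradicting independence at t
    have hMtop : ∀ z : L, z ∈ M := by
      intro z
      have : z ∈ I := by rw [hItop]; exact LieSubmodule.mem_top z
      exact ((hImem z).mp this).2
    have hMle : M ≤ ⨆ g, ⨆ _ : g ≠ t, Lg g := by
      refine iSup_le fun g => iSup_le fun hg => ?_
      refine le_iSup_of_le g (le_iSup_of_le ?_ le_rfl)
      rintro rfl
      exact hst hg.symm
    have hdisj : Disjoint (Lg t) M := ((hindep t).mono_right hMle)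
    have : Lg t = ⊥ := hdisj.eq_bot_of_le (fun z hz => hMtop z)
    exact ht this
  -- Step 2: closure of a pairwise-commuting set is abelian.
  have h1 : ∀ s ∈ {g : G | Lg g ≠ ⊥},
      Subgroup.closure {g : G | Lg g ≠ ⊥} ≤ Subgroup.centralizer {s} := by
    intro s hs
    rw [Subgroup.closure_le]
    intro t ht
    rw [SetLike.mem_coe, Subgroup.mem_centralizer_iff]
    intro x hx
    rw [Set.mem_singleton_iff] at hx
    subst hx
    exact key x hs t ht
  have h2 : Subgroup.closure {g : G | Lg g ≠ ⊥} ≤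
      Subgroup.centralizer (Subgroup.closure {g : G | Lg g ≠ ⊥} : Set G) := by
    rw [Subgroup.closure_le]
    intro s hs
    rw [SetLike.mem_coe, Subgroup.mem_centralizer_iff]
    intro g hg
    have h3 : g ∈ Subgroup.centralizer {s} := h1 s hs hg
    have h4 := Subgroup.mem_centralizer_iff.mp h3 s (Set.mem_singleton s)
    exact h4.symm
  intro a ha b hb
  exact (Subgroup.mem_centralizer_iff.mp (h2 hb)) a ha
end
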